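/- arXiv:1909.09596 — 6 statements merged into one kernel-verified Lean document; each statement's English description precedes it below -/
import Mathlib

section
/- (Sufficient condition for exact structure recovery.) Let T = (V, E) be a tree on p nodes, let X = (X_1, …, X_p) be a random vector whose distribution is Markov with respect to T, and for each pair i, j ∈ V let I(X_i; X_j) denote the mutual information and Î(X_i; X_j) any estimate of it. Suppose that for every pair ℓ, ℓ̄ ∈ V, |Î(X_ℓ; X_ℓ̄) − I(X_ℓ; X_ℓ̄)| < (1/2) · min over tuples ((w,w̄), u, ū) ∈ EV² of ( I(X_w; X_w̄) − I(X_u; X_ū) ). Then the maximum spanning tree computed from the edge weights { Î(X_i; X_j) : i, j ∈ V } equals T. -/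
set_option linter.unusedSectionVars false

open scoped Classical

noncomputable section

namespace TreePaper

/-- `f` is a probability mass function. -/
def IsProbDist {α : Type*} (f : α → ℝ) : Prop :=
  (∀ a, 0 ≤ f a) ∧ ∑' a, f a = 1

/-- Shannon entropy (base 2) of a pmf, with the convention `0 · log 0 = 0`. -/
def ent {α : Type*} (f : α → ℝ) : ℝ := -∑' a, f a * Real.logb 2 (f a)

variable {V : Type*} [Fintype V] [DecidableEq V] {A : Type*}

/-- Marginal pmf of the coordinate `i`. -/
def marg1 (P : (V → A) → ℝ) (i : V) : A → ℝ :=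
  fun a => ∑' x : V → A, if x i = a then P x else 0

/-- Joint pmf of the pair of coordinates `(i, j)`. -/
def marg2 (P : (V → A) → ℝ) (i j : V) : A × A → ℝ :=
  fun ab => ∑' x : V → A, if x i = ab.1 ∧ x j = ab.2 then P x else 0

theorem marg2_symm (P : (V → A) → ℝ) (i j : V) (a b : A) :
    marg2 P i j (a, b) = marg2 P j i (b, a) :=
  tsum_congr fun _ => if_congr and_comm rfl rfl

/-- Mutual information (in bits) between the coordinates `i` and `j`,
`I(X_i; X_j) = H(X_i) + H(X_j) − H(X_i, X_j)`. -/
def mi (P : (V → A) → ℝ) (i j : V) : ℝ :=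
  ent (marg1 P i) + ent (marg1 P j) - ent (marg2 P i j)

/-- The factor attached to an edge in the tree factorization of a Markov random field. -/
def edgeFactor (P : (V → A) → ℝ) (x : V → A) : Sym2 V → ℝ :=
  Sym2.lift ⟨fun i j => marg2 P i j (x i, x j) / (marg1 P i (x i) * marg1 P j (x j)),
    fun i j => by
      dsimp only
      rw [marg2_symm P i j (x i) (x j), mul_comm (marg1 P i (x i)) (marg1 P j (x j))]⟩

/-- The distribution `P` is Markov with respect to (i.e. factorizes according to)
the tree `T`:  `p(x) = ∏_i p(x_i) ∏_{(i,j) ∈ E} p(x_i, x_j) / (p(x_i) p(x_j))`. -/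
def IsMarkovTree (T : SimpleGraph V) (P : (V → A) → ℝ) : Prop :=
  ∀ x : V → A,
    P x = (∏ i, marg1 P i (x i)) *
      ∏ e : Sym2 V, if e ∈ T.edgeSet then edgeFactor P x e else 1

/-- The tuple `(s(w, w̄), u, ū)` lies in the feasibility set `EV²`:  `s(w, w̄)` is an
edge of `T` lying on the unique path of `T` from `u` to `ū`, and this path has
at least two edges. -/
def EVtuple (T : SimpleGraph V) (w wb u ub : V) : Prop :=
  T.Adj w wb ∧ ∃ p : T.Walk u ub, p.IsPath ∧ s(w, wb) ∈ p.edges ∧ 2 ≤ p.length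

/-- The information threshold determined by the tree `T` and the
pairwise "mutual information" weights `I`:
`(1/2) · min_{(e,u,ū) ∈ EV²} ( I(w, w̄) − I(u, ū) )`. -/
def thresh (T : SimpleGraph V) (I : V → V → ℝ) : ℝ :=
  (1 / 2) * sInf {x : ℝ | ∃ w wb u ub : V, EVtuple T w wb u ub ∧ x = I w wb - I u ub}

/-- Total weight of the graph `G` under the edge weights `I`. -/
def score (I : V → V → ℝ) (G : SimpleGraph V) : ℝ :=
  ∑ i, ∑ j, if G.Adj i j then I i j else 0

/-- `G` is a maximum-weight spanning tree for the weights `I`. -/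
def IsMaxSpanTree (I : V → V → ℝ) (G : SimpleGraph V) : Prop :=
  G.IsTree ∧ ∀ G' : SimpleGraph V, G'.IsTree → score I G' ≤ score I G

end TreePaper

/-! A maximum-weight spanning tree `G ≠ T` for `Ihat` has an edge `s(u, ū)` outside `T`.
Deleting it splits `G` in two, and the `T`-path from `u` to `ū`, which has at least two edges,
crosses between the halves along some `T`-edge `s(w, w̄)`; thus `(s(w, w̄), u, ū) ∈ EV²`, and
exchanging `s(u, ū)` for `s(w, w̄)` gives another spanning tree. As
`I(w; w̄) − I(u; ū) ≥ 2 · thresh` while each estimate is off by less than `thresh`, the exchange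
strictly increases the `Ihat`-weight, contradicting maximality. -/

namespace SimpleGraph

variable {V : Type*} {G T : SimpleGraph V}

lemma Connected.reachable_deleteEdges_or (hG : G.Connected) (u v x : V) :
    (G.deleteEdges {s(u, v)}).Reachable u x ∨ (G.deleteEdges {s(u, v)}).Reachable v x := by
  set K := G.deleteEdges {s(u, v)}
  by_contra! hx
  obtain ⟨d, -, hd, hd'⟩ := (hG.preconnected u x).some.exists_boundary_dart
    {y | K.Reachable u y ∨ K.Reachable v y} (Or.inl .rfl) fun h => h.elim hx.1 hx.2
  apply hd'
  by_cases he : s(d.fst, d.snd) = s(u, v)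
  · rcases Sym2.eq_iff.mp he with ⟨-, h⟩ | ⟨-, h⟩
    · exact Or.inr (h ▸ .rfl)
    · exact Or.inl (h ▸ .rfl)
  · have hK : K.Adj d.fst d.snd := deleteEdges_adj.mpr ⟨d.adj, he⟩
    exact hd.imp (·.trans hK.reachable) (·.trans hK.reachable)

lemma IsTree.isTree_deleteEdges_sup_edge (hG : G.IsTree) {u v w w' : V}
    (h : ¬ (G.deleteEdges {s(u, v)}).Reachable w w') :
    (G.deleteEdges {s(u, v)} ⊔ edge w w').IsTree := by
  set K := G.deleteEdges {s(u, v)}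
  have hle : K ≤ K ⊔ edge w w' := le_sup_left
  have hww' : (K ⊔ edge w w').Adj w w' :=
    Or.inr ((edge_adj ..).mpr ⟨Or.inl ⟨rfl, rfl⟩, fun e => h (e ▸ .rfl)⟩)
  -- `w` and `w'` lie on opposite sides of the deleted edge, so the new edge rejoins `u` and `v`
  have huv : (K ⊔ edge w w').Reachable u v := by
    rcases hG.connected.reachable_deleteEdges_or u v w with hw | hw <;>
      rcases hG.connected.reachable_deleteEdges_or u v w' with hw' | hw'
    · exact absurd (hw.symm.trans hw') h
    · exact ((hw.mono hle).trans hww'.reachable).trans (hw'.symm.mono hle)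
    · exact ((hw'.mono hle).trans hww'.reachable.symm).trans (hw.symm.mono hle)
    · exact absurd (hw.symm.trans hw') h
  refine ⟨(connected_iff_exists_forall_reachable _).2 ⟨u, fun x => ?_⟩,
    (hG.isAcyclic.anti (deleteEdges_le _)).sup_edge_of_not_reachable h⟩
  rcases hG.connected.reachable_deleteEdges_or u v x with hx | hx
  · exact hx.mono hle
  · exact huv.trans (hx.mono hle)

lemma IsTree.exists_adj_not_adj_of_ne (hT : T.IsTree) (hG : G.Connected) (hne : G ≠ T) :
    ∃ u v, G.Adj u v ∧ ¬ T.Adj u v := by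
  by_contra! hle
  exact hne ((isTree_iff_minimal_connected.mp hT).eq_of_le hG hle)

end SimpleGraph

namespace TreePaper

open SimpleGraph

variable {V : Type*} {A : Type*}

lemma ent_comp_equiv {α β : Type*} (f : α → ℝ) (e : β ≃ α) : ent (f ∘ e) = ent f :=
  congrArg Neg.neg (e.tsum_eq fun a => f a * Real.logb 2 (f a))

lemma mi_comm (P : (V → A) → ℝ) (i j : V) : mi P i j = mi P j i := by
  have hswap : marg2 P j i = marg2 P i j ∘ Equiv.prodComm A A := by
    ext ⟨a, b⟩
    exact tsum_congr fun _ => if_congr and_comm rfl rfl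
  rw [mi, mi, hswap, ent_comp_equiv]
  ring

lemma two_mul_thresh_le [Finite V] (T : SimpleGraph V) (I : V → V → ℝ) {w wb u ub : V}
    (h : EVtuple T w wb u ub) : 2 * thresh T I ≤ I w wb - I u ub := by
  have hfin : {x : ℝ | ∃ w wb u ub : V, EVtuple T w wb u ub ∧ x = I w wb - I u ub}.Finite :=
    (Set.finite_range fun q : V × V × V × V => I q.1 q.2.1 - I q.2.2.1 q.2.2.2).subset
      fun _ ⟨w, wb, u, ub, _, hx⟩ => ⟨(w, wb, u, ub), hx.symm⟩
  have := csInf_le hfin.bddBelow ⟨w, wb, u, ub, h, rfl⟩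
  rw [thresh]
  linarith

lemma exists_evTuple_not_reachable_deleteEdges {G T : SimpleGraph V} (hT : T.Connected)
    (hG : G.IsAcyclic) {u v : V} (huv : G.Adj u v) (hTuv : ¬ T.Adj u v) :
    ∃ w w', EVtuple T w w' u v ∧ ¬ (G.deleteEdges {s(u, v)}).Reachable w w' := by
  set K := G.deleteEdges {s(u, v)}
  obtain ⟨p, hp⟩ := hT.exists_isPath u v
  obtain ⟨d, hd, hdu, hdv⟩ := p.exists_boundary_dart {x | K.Reachable u x} .rfl
    (isAcyclic_iff_forall_adj_isBridge.mp hG huv)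
  have hlen : 2 ≤ p.length := by
    have h0 : p.length ≠ 0 := fun h => huv.ne (Walk.eq_of_length_eq_zero h)
    have h1 : p.length ≠ 1 := fun h => hTuv (Walk.adj_of_length_eq_one h)
    omega
  exact ⟨d.fst, d.snd, ⟨d.adj, p, hp, List.mem_map_of_mem hd, hlen⟩, fun h => hdv (hdu.trans h)⟩

section score

variable [Fintype V] (I : V → V → ℝ)

lemma score_sup_of_disjoint {G H : SimpleGraph V} (h : Disjoint G H) :
    score I (G ⊔ H) = score I G + score I H := by
  simp only [score, ← Finset.sum_add_distrib]
  refine Finset.sum_congr rfl fun i _ => Finset.sum_congr rfl fun j _ => ?_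
  by_cases hG : G.Adj i j
  · have hH : ¬ H.Adj i j := fun hH => h.le_bot (show (G ⊓ H).Adj i j from ⟨hG, hH⟩)
    simp [hG, hH]
  · simp [hG]

lemma score_edge {a b : V} (h : a ≠ b) : score I (edge a b) = I a b + I b a := by
  calc score I (edge a b)
      = ∑ i, ∑ j, ((if i = a then if j = b then I i j else 0 else 0) +
          (if i = b then if j = a then I i j else 0 else 0)) := by
        refine Finset.sum_congr rfl fun i _ => Finset.sum_congr rfl fun j _ => ?_
        split_ifs <;> grind
    _ = I a b + I b a := by simp [Finset.sum_add_distrib]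

lemma score_sup_edge {G : SimpleGraph V} {a b : V} (h : ¬ G.Adj a b) (hab : a ≠ b) :
    score I (G ⊔ edge a b) = score I G + (I a b + I b a) := by
  rw [score_sup_of_disjoint I (G.disjoint_edge.mpr h), score_edge I hab]

lemma score_eq_score_deleteEdges_add {G : SimpleGraph V} {a b : V} (h : G.Adj a b) :
    score I G = score I (G.deleteEdges {s(a, b)}) + (I a b + I b a) := by
  have hG : G.deleteEdges {s(a, b)} ⊔ edge a b = G :=
    sdiff_sup_cancel (G.edge_le_iff.mpr (.inr h))
  rw [← score_sup_edge I (by simp) h.ne, hG]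

end score

lemma add_swap_lt_add_swap_of_abs_sub_lt {I Ihat : V → V → ℝ} {t : ℝ}
    (hI : ∀ i j, I i j = I j i) (hclose : ∀ i j, i ≠ j → |Ihat i j - I i j| < t)
    {w wb u ub : V} (hw : w ≠ wb) (hu : u ≠ ub) (hgap : 2 * t ≤ I w wb - I u ub) :
    Ihat u ub + Ihat ub u < Ihat w wb + Ihat wb w := by
  have h1 := abs_lt.mp (hclose w wb hw)
  have h2 := abs_lt.mp (hclose wb w hw.symm)
  have h3 := abs_lt.mp (hclose u ub hu)
  have h4 := abs_lt.mp (hclose ub u hu.symm)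
  rw [hI wb w] at h2
  rw [hI ub u] at h4
  linarith [h1.1, h2.1, h3.2, h4.2]

theorem exact_recovery_of_estimates_close_general
    {V : Type*} [Fintype V] {A : Type*}
    (T : SimpleGraph V) (hT : T.IsTree)
    (P : (V → A) → ℝ)
    (Ihat : V → V → ℝ)
    (hclose : ∀ ℓ ℓb : V, ℓ ≠ ℓb → |Ihat ℓ ℓb - mi P ℓ ℓb| < thresh T (mi P)) :
    ∀ G : SimpleGraph V, IsMaxSpanTree Ihat G → G = T := by
  rintro G ⟨hG, hGmax⟩
  by_contra hne
  obtain ⟨u, v, hGuv, hTuv⟩ := hT.exists_adj_not_adj_of_ne hG.connected hne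
  obtain ⟨w, w', hEV, hww'⟩ :=
    exists_evTuple_not_reachable_deleteEdges hT.connected hG.isAcyclic hGuv hTuv
  have hgain : Ihat u v + Ihat v u < Ihat w w' + Ihat w' w :=
    add_swap_lt_add_swap_of_abs_sub_lt (mi_comm P) hclose hEV.1.ne hGuv.ne
      (two_mul_thresh_le T (mi P) hEV)
  have hmax := hGmax _ (hG.isTree_deleteEdges_sup_edge hww')
  rw [score_sup_edge Ihat (fun h => hww' h.reachable) hEV.1.ne,
    score_eq_score_deleteEdges_add Ihat hGuv] at hmax
  linarith

/-- **Sufficient condition for exact structure recovery.**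
If every pairwise mutual information estimate is within the information threshold
of the true mutual information, then every maximum-weight spanning tree for the
estimated weights (i.e. the output of the Chow–Liu algorithm) is the true tree `T`. -/
theorem exact_recovery_of_estimates_close
    {V : Type*} [Fintype V] [DecidableEq V] {A : Type*} [Countable A]
    (T : SimpleGraph V) (hT : T.IsTree)
    (P : (V → A) → ℝ) (hP : IsProbDist P) (hMarkov : IsMarkovTree T P)
    (Ihat : V → V → ℝ)
    (hclose : ∀ ℓ ℓb : V, ℓ ≠ ℓb → |Ihat ℓ ℓb - mi P ℓ ℓb| < thresh T (mi P)) :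
    ∀ G : SimpleGraph V, IsMaxSpanTree Ihat G → G = T :=
  exact_recovery_of_estimates_close_general T hT P Ihat hclose

end TreePaper
end
end

section
/- (Theorem 3: minimax converse as the information threshold vanishes.) For η > 0, let C_η^T denote the class of all tree-structured models M on p nodes (p an odd integer > 1, finite alphabet) whose information threshold satisfies 0 < I^o_M ≤ η. Then for any finite sample size n < ∞ and any estimator Φ mapping n i.i.d. samples X^{1:n} to a tree in the set T of all trees on p nodes, inf over estimators Φ of lim_{η ↓ 0} sup_{M ∈ C_η^T} P( Φ(X^{1:n}_{T_M}) ≠ T_M ) ≥ 1/2, where X^{1:n}_{T_M} are n i.i.d. samples from model M and T_M is the tree structure of M. -/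
set_option linter.unusedSectionVars false

open scoped Classical

noncomputable section

namespace TreePaper

variable {V : Type*} [Fintype V] [DecidableEq V] {A : Type*}

/-- Probability of the event `E` under `n` i.i.d. samples from the pmf `P`. -/
def probn (P : (V → A) → ℝ) (n : ℕ) (E : Set (Fin n → V → A)) : ℝ :=
  ∑' ω : E, ∏ k, P (ω.1 k)

/-- Empirical marginal pmf of the coordinate `i` computed from the data set `ω`. -/
def emp1 {n : ℕ} (ω : Fin n → V → A) (i : V) : A → ℝ :=
  fun a => (∑ k, if ω k i = a then (1 : ℝ) else 0) / n

/-- Empirical pairwise joint pmf of the coordinates `(i, j)`. -/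
def emp2 {n : ℕ} (ω : Fin n → V → A) (i j : V) : A × A → ℝ :=
  fun ab => (∑ k, if ω k i = ab.1 ∧ ω k j = ab.2 then (1 : ℝ) else 0) / n

/-- Plug-in estimate of the mutual information between coordinates `i` and `j`. -/
def empMI {n : ℕ} (ω : Fin n → V → A) (i j : V) : ℝ :=
  ent (emp1 ω i) + ent (emp1 ω j) - ent (emp2 ω i j)

/-- The Chow–Liu algorithm recovers the tree `T` exactly on the data set `ω`:
every maximum-weight spanning tree for the plug-in mutual information edge
weights equals `T`. -/
def CLRecovers {n : ℕ} (T : SimpleGraph V) (ω : Fin n → V → A) : Prop :=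
  ∀ G : SimpleGraph V, IsMaxSpanTree (fun i j => empMI ω i j) G → G = T

/-- Assumption 2: connectivity, strictly positive pairwise mutual informations,
and nondegeneracy (the tree structure is unique). -/
def Assumption2 (T : SimpleGraph V) (P : (V → A) → ℝ) : Prop :=
  T.Connected ∧ (∀ i j : V, i ≠ j → 0 < mi P i j) ∧
    ∀ T' : SimpleGraph V, T'.IsTree → IsMarkovTree T' P → T' = T

/-- A tree-structured model on `p` nodes over the finite alphabet `X`:
a tree together with a distribution that is Markov with respect to it. -/
structure TreeModel (p : ℕ) (X : Type*) where
  tree : SimpleGraph (Fin p)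
  isTree : tree.IsTree
  dist : (Fin p → X) → ℝ
  prob : IsProbDist dist
  markov : IsMarkovTree tree dist

/-- The class `C_η^𝒯` of all tree-structured models with positive,
`η`-bounded information threshold `0 < I^o_M ≤ η`. -/
def modelClass (p : ℕ) (X : Type*) (η : ℝ) : Set (TreeModel p X) :=
  {M | 0 < thresh M.tree (mi M.dist) ∧ thresh M.tree (mi M.dist) ≤ η}

/-- Worst-case probability that the tree estimator `Φ` (from `n` i.i.d. samples)
fails to recover the structure, over all models in `C_η^𝒯`. -/
def errSup (p : ℕ) (X : Type*) (n : ℕ)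
    (Φ : (Fin n → Fin p → X) → {G : SimpleGraph (Fin p) // G.IsTree}) (η : ℝ) : ℝ :=
  sSup {x : ℝ | ∃ M ∈ modelClass p X η,
    x = probn M.dist n {ω | (Φ ω).1 ≠ M.tree}}

end TreePaper

/-!
Le Cam's two-point method. For `0 < δ < 1/2` consider, on `{a₀, a₁}^p`, the star-shaped model
whose centre is uniform and whose leaves are independent copies of the centre, each flipped with
probability `δ`. An edge carries `1 - h(δ)` bits of mutual information and a pair of leaves
`1 - h(2δ(1-δ))`, so the information threshold is `(h(2δ(1-δ)) - h(δ)) / 2`, which is positive and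
tends to `0` as `δ → 1/2`. At `δ = 1/2` the stars centred at two different vertices define the same
(uniform) law, so by continuity the error probabilities of any estimator on these two models add
up to almost `1` when `δ` is close to `1/2`. Hence the worst-case error over `C_η` is at least
`1/2` for every `η > 0`; it is monotone in `η`, so its limit as `η ↓ 0` exists and is `≥ 1/2`.
-/

open SimpleGraph Finset Real Filter Topology

namespace SimpleGraph

variable {V : Type*}

lemma IsAcyclic.ne_and_not_adj_of_two_le_length {G : SimpleGraph V} (hG : G.IsAcyclic)
    {u v : V} {p : G.Walk u v} (hp : p.IsPath) (hlen : 2 ≤ p.length) : u ≠ v ∧ ¬G.Adj u v := by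
  refine ⟨?_, fun hadj => ?_⟩
  · rintro rfl
    have := Walk.length_eq_zero_iff.mpr (Walk.isPath_iff_nil.mp hp)
    omega
  · have := congrArg (fun q : G.Path u v => q.1.length)
      ((hG.subsingleton_path u v).elim ⟨p, hp⟩ (Path.singleton hadj))
    simp only [Path.singleton_coe, Walk.length_cons, Walk.length_nil] at this
    omega

lemma starGraph_ne_starGraph {r r' w : V} (hr : r ≠ r') (hw : w ≠ r) (hw' : w ≠ r') :
    starGraph r ≠ starGraph r' := by
  intro h
  have : (starGraph r').Adj r' w := starGraph_center_adj hw'.symm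
  rw [← h, starGraph_adj] at this
  tauto

lemma prod_starGraph_edgeSet [Fintype V] [DecidableEq V] (c : V) (f : Sym2 V → ℝ) :
    (∏ e : Sym2 V, if e ∈ (starGraph c).edgeSet then f e else 1)
      = ∏ j ∈ univ.erase c, f s(c, j) := by
  have hedges : univ.filter (· ∈ (starGraph c).edgeSet) = (univ.erase c).image (s(c, ·)) := by
    ext e
    induction e with
    | _ i j =>
      simp only [mem_filter, mem_univ, true_and, mem_edgeSet, starGraph_adj, mem_image,
        mem_erase, Sym2.eq_iff]
      aesop
  rw [← prod_filter, hedges, prod_image]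
  intro a ha b _ hab
  rcases Sym2.eq_iff.mp hab with ⟨-, h⟩ | ⟨-, h⟩
  · exact h
  · exact absurd h (mem_erase.mp ha).1

end SimpleGraph

lemma sum_ite_forall_eq_prod {ι α R : Type*} [Fintype ι] [DecidableEq ι] [Fintype α]
    [CommSemiring R] (f : ι → α → R) (s : Finset ι) (y : ι → α)
    (hf : ∀ i ∉ s, ∑ a, f i a = 1) :
    ∑ x : ι → α, (if ∀ i ∈ s, x i = y i then ∏ i, f i (x i) else 0) = ∏ i ∈ s, f i (y i) := by
  set g : ι → α → R := fun i a => if i ∈ s then (if a = y i then f i a else 0) else f i a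
  have hg : ∀ x : ι → α, (if ∀ i ∈ s, x i = y i then ∏ i, f i (x i) else 0) = ∏ i, g i (x i) := by
    intro x
    split_ifs with hx
    · exact prod_congr rfl fun i _ => by simp +contextual [g, hx]
    · push Not at hx
      obtain ⟨i, hi, hxi⟩ := hx
      exact (prod_eq_zero (mem_univ i) (by simp [g, hi, hxi])).symm
  have hrow : ∀ i, ∑ a, g i a = if i ∈ s then f i (y i) else 1 := by
    intro i
    by_cases hi : i ∈ s <;> simp [g, hi, hf]
  rw [sum_congr rfl fun x _ => hg x, ← Fintype.prod_sum, prod_congr rfl fun i _ => hrow i,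
    prod_ite_mem_eq]

lemma exists_tendsto_nhdsGT_of_monotoneOn {f : ℝ → ℝ} {a b : ℝ} (hf : MonotoneOn f (Set.Ioi a))
    (hb : ∀ x ∈ Set.Ioi a, b ≤ f x) : ∃ L, Tendsto f (𝓝[>] a) (𝓝 L) ∧ b ≤ L :=
  ⟨sInf (f '' Set.Ioi a), hf.tendsto_nhdsGT ⟨b, Set.forall_mem_image.2 hb⟩,
    le_csInf (Set.nonempty_Ioi.image f) (Set.forall_mem_image.2 hb)⟩

namespace TreePaper

lemma ent_eq_sum_negMulLog {α : Type*} [Fintype α] (f : α → ℝ) :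
    ent f = (∑ a, negMulLog (f a)) / log 2 := by
  rw [ent, tsum_fintype, sum_div, ← sum_neg_distrib]
  refine sum_congr rfl fun a _ => ?_
  rw [negMulLog, logb]
  ring

lemma negMulLog_two_inv : negMulLog 2⁻¹ = 2⁻¹ * log 2 := by
  rw [negMulLog, log_inv]
  ring

variable {V : Type*} [DecidableEq V] {A : Type*}

section Factorization

variable [Fintype V]

lemma edgeFactor_mk (P : (V → A) → ℝ) (x : V → A) (i j : V) :
    edgeFactor P x s(i, j) = marg2 P i j (x i, x j) / (marg1 P i (x i) * marg1 P j (x j)) :=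
  rfl

lemma isMarkovTree_starGraph_of_eq {c : V} {P : (V → A) → ℝ}
    (h : ∀ x, P x = (∏ i, marg1 P i (x i)) * ∏ j ∈ univ.erase c, edgeFactor P x s(c, j)) :
    IsMarkovTree (starGraph c) P := by
  intro x
  rw [h x]
  congr 1
  -- `IsMarkovTree` decides edge membership classically, not by the instance of `starGraph`.
  convert (prod_starGraph_edgeSet c (edgeFactor P x)).symm

end Factorization

section Sampling

variable [Fintype V] [Fintype A]

lemma probn_eq_sum (P : (V → A) → ℝ) (n : ℕ) (E : Set (Fin n → V → A)) :
    probn P n E = ∑ ω, E.indicator (fun ω => ∏ k, P (ω k)) ω := by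
  rw [probn, tsum_subtype E (fun ω => ∏ k, P (ω k)), tsum_fintype]

lemma probn_add_probn_compl {P : (V → A) → ℝ} (hP : ∑ x, P x = 1) (n : ℕ)
    (E : Set (Fin n → V → A)) : probn P n E + probn P n Eᶜ = 1 := by
  rw [probn_eq_sum, probn_eq_sum, ← sum_add_distrib]
  simp_rw [Set.indicator_self_add_compl_apply]
  rw [← Fintype.prod_sum, prod_congr rfl fun _ _ => hP, prod_const_one]

lemma probn_mono {P : (V → A) → ℝ} (hP : ∀ x, 0 ≤ P x) (n : ℕ)
    {E E' : Set (Fin n → V → A)} (h : E ⊆ E') : probn P n E ≤ probn P n E' := by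
  rw [probn_eq_sum, probn_eq_sum]
  exact sum_le_sum fun ω _ =>
    Set.indicator_le_indicator_of_subset h (fun ω => prod_nonneg fun k _ => hP _) ω

lemma probn_le_one {P : (V → A) → ℝ} (hP₀ : ∀ x, 0 ≤ P x) (hP₁ : ∑ x, P x = 1) (n : ℕ)
    (E : Set (Fin n → V → A)) : probn P n E ≤ 1 := by
  rw [← probn_add_probn_compl hP₁ n E, le_add_iff_nonneg_right, probn_eq_sum]
  exact sum_nonneg fun ω _ => Set.indicator_nonneg (fun ω _ => prod_nonneg fun k _ => hP₀ _) ω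

lemma continuous_probn {T : Type*} [TopologicalSpace T] {P : T → (V → A) → ℝ}
    (hP : ∀ x, Continuous fun t => P t x) (n : ℕ) (E : Set (Fin n → V → A)) :
    Continuous fun t => probn (P t) n E := by
  simp_rw [probn_eq_sum]
  refine continuous_finsetSum _ fun ω _ => ?_
  by_cases hω : ω ∈ E
  · simpa [hω] using continuous_finsetProd _ fun k _ => hP (ω k)
  · simpa [hω] using continuous_const

end Sampling

section StarModel

variable {a₀ a₁ : A}

def pairInd (a₀ a₁ a : A) : ℝ := if a = a₀ ∨ a = a₁ then 1 else 0

/-- Transition probability `y ↦ z` of the binary symmetric channel with crossover `δ`. -/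
def bsc (δ : ℝ) (y z : A) : ℝ := if y = z then 1 - δ else δ

def starKernel (a₀ a₁ : A) (c : V) (δ : ℝ) (z : A) (i : V) (y : A) : ℝ :=
  if i = c then (if y = z then 1 else 0) else pairInd a₀ a₁ y * bsc δ y z

lemma bsc_comm (δ : ℝ) (y z : A) : bsc δ y z = bsc δ z y := by
  simp only [bsc, eq_comm]

lemma bsc_add_bsc (h01 : a₀ ≠ a₁) (δ : ℝ) {z : A} (hz : z = a₀ ∨ z = a₁) :
    bsc δ a₀ z + bsc δ a₁ z = 1 := by
  rcases hz with rfl | rfl <;> simp [bsc, h01, h01.symm]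

lemma negMulLog_pairInd_mul (a₀ a₁ a : A) (t : ℝ) :
    negMulLog (pairInd a₀ a₁ a * t) = pairInd a₀ a₁ a * negMulLog t := by
  unfold pairInd
  split_ifs <;> simp

lemma sum_pairInd_mul [Fintype A] (h01 : a₀ ≠ a₁) (t : A → ℝ) :
    ∑ a, pairInd a₀ a₁ a * t a = t a₀ + t a₁ := by
  simp_rw [pairInd, ite_mul, one_mul, zero_mul]
  rw [← sum_filter, show univ.filter (fun a => a = a₀ ∨ a = a₁) = {a₀, a₁} by ext; simp,
    sum_pair h01]

lemma sum_starKernel [Fintype A] (h01 : a₀ ≠ a₁) (c : V) (δ : ℝ) {z : A} (hz : z = a₀ ∨ z = a₁)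
    (i : V) : ∑ y, starKernel a₀ a₁ c δ z i y = 1 := by
  by_cases hi : i = c
  · simp [starKernel, hi]
  · simp only [starKernel, hi, if_false]
    rw [sum_pairInd_mul h01 (fun y => bsc δ y z), bsc_add_bsc h01 δ hz]

variable [Fintype V]

/-- The centre `c` is uniform on `{a₀, a₁}` and, given the centre, the other coordinates are
independent copies of it sent through the binary symmetric channel with crossover `δ`. -/
def starDist (a₀ a₁ : A) (c : V) (δ : ℝ) (x : V → A) : ℝ :=
  2⁻¹ * (∏ i, starKernel a₀ a₁ c δ a₀ i (x i) + ∏ i, starKernel a₀ a₁ c δ a₁ i (x i))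

/-- Law of `(U, U')` with `U` uniform on `{a₀, a₁}` and `U'` its image under `bsc γ`. -/
def pairDist (a₀ a₁ : A) (γ : ℝ) (ab : A × A) : ℝ :=
  2⁻¹ * pairInd a₀ a₁ ab.1 * pairInd a₀ a₁ ab.2 * bsc γ ab.1 ab.2

lemma starDist_nonneg {δ : ℝ} (hδ : δ ∈ Set.Icc 0 1) (c : V) (x : V → A) :
    0 ≤ starDist a₀ a₁ c δ x := by
  have hK : ∀ z i y, 0 ≤ starKernel a₀ a₁ c δ z i y := by
    intro z i y
    unfold starKernel pairInd bsc
    split_ifs <;> linarith [hδ.1, hδ.2]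
  unfold starDist
  have := prod_nonneg fun i (_ : i ∈ univ) => hK a₀ i (x i)
  have := prod_nonneg fun i (_ : i ∈ univ) => hK a₁ i (x i)
  positivity

lemma starDist_apply (h01 : a₀ ≠ a₁) (c : V) (δ : ℝ) (x : V → A) :
    starDist a₀ a₁ c δ x = 2⁻¹ * pairInd a₀ a₁ (x c) *
      ∏ i ∈ univ.erase c, pairInd a₀ a₁ (x i) * bsc δ (x i) (x c) := by
  have hprod : ∀ z, ∏ i, starKernel a₀ a₁ c δ z i (x i)
      = (if x c = z then 1 else 0) * ∏ i ∈ univ.erase c, pairInd a₀ a₁ (x i) * bsc δ (x i) z := by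
    intro z
    rw [← mul_prod_erase _ _ (mem_univ c)]
    congr 1
    · simp [starKernel]
    · exact prod_congr rfl fun i hi => by simp [starKernel, (mem_erase.mp hi).1]
  rw [starDist, hprod, hprod]
  by_cases h0 : x c = a₀
  · simp [h0, pairInd, h01]
  by_cases h1 : x c = a₁
  · simp [h1, pairInd, Ne.symm h01]
  · simp [h0, h1, pairInd]

lemma starDist_two_inv (h01 : a₀ ≠ a₁) (c : V) (x : V → A) :
    starDist a₀ a₁ c 2⁻¹ x = ∏ i, 2⁻¹ * pairInd a₀ a₁ (x i) := by
  have hbsc : ∀ y z : A, bsc (2⁻¹ : ℝ) y z = 2⁻¹ := fun y z => by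
    unfold bsc
    split_ifs <;> norm_num
  rw [starDist_apply h01, ← mul_prod_erase _ _ (mem_univ c)]
  simp_rw [hbsc, mul_comm (pairInd a₀ a₁ _) 2⁻¹]

lemma continuous_starDist (c : V) (x : V → A) : Continuous fun δ => starDist a₀ a₁ c δ x := by
  have hK : ∀ z i y, Continuous fun δ => starKernel a₀ a₁ c δ z i y := by
    intro z i y
    unfold starKernel bsc
    split_ifs <;> fun_prop
  unfold starDist
  fun_prop

variable [Fintype A]

lemma sum_starDist (h01 : a₀ ≠ a₁) (c : V) (δ : ℝ) : ∑ x, starDist a₀ a₁ c δ x = 1 := by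
  simp_rw [starDist, ← mul_sum, sum_add_distrib, ← Fintype.prod_sum,
    sum_starKernel h01 c δ (Or.inl rfl), sum_starKernel h01 c δ (Or.inr rfl)]
  norm_num

lemma marg1_starDist (h01 : a₀ ≠ a₁) (c : V) (δ : ℝ) (j : V) (a : A) :
    marg1 (starDist a₀ a₁ c δ) j a
      = 2⁻¹ * (starKernel a₀ a₁ c δ a₀ j a + starKernel a₀ a₁ c δ a₁ j a) := by
  have key : ∀ z, z = a₀ ∨ z = a₁ → ∑ x : V → A,
      (if x j = a then ∏ i, starKernel a₀ a₁ c δ z i (x i) else 0) = starKernel a₀ a₁ c δ z j a :=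
    fun z hz => by
      simpa using sum_ite_forall_eq_prod _ {j} (fun _ => a) fun i _ => sum_starKernel h01 c δ hz i
  rw [marg1, tsum_fintype, ← key a₀ (Or.inl rfl), ← key a₁ (Or.inr rfl), ← sum_add_distrib,
    mul_sum]
  refine sum_congr rfl fun x _ => ?_
  split_ifs <;> simp [starDist]

lemma marg2_starDist (h01 : a₀ ≠ a₁) (c : V) (δ : ℝ) {j k : V} (hjk : j ≠ k) (a b : A) :
    marg2 (starDist a₀ a₁ c δ) j k (a, b)
      = 2⁻¹ * (starKernel a₀ a₁ c δ a₀ j a * starKernel a₀ a₁ c δ a₀ k b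
          + starKernel a₀ a₁ c δ a₁ j a * starKernel a₀ a₁ c δ a₁ k b) := by
  have key : ∀ z, z = a₀ ∨ z = a₁ → ∑ x : V → A,
      (if x j = a ∧ x k = b then ∏ i, starKernel a₀ a₁ c δ z i (x i) else 0)
        = starKernel a₀ a₁ c δ z j a * starKernel a₀ a₁ c δ z k b :=
    fun z hz => by
      simpa [prod_pair hjk, hjk.symm] using sum_ite_forall_eq_prod _ {j, k}
        (fun i => if i = j then a else b) fun i _ => sum_starKernel h01 c δ hz i
  rw [marg2, tsum_fintype, ← key a₀ (Or.inl rfl), ← key a₁ (Or.inr rfl), ← sum_add_distrib,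
    mul_sum]
  refine sum_congr rfl fun x _ => ?_
  split_ifs <;> simp [starDist]

lemma marg1_starDist_eq (h01 : a₀ ≠ a₁) (c : V) (δ : ℝ) (j : V) :
    marg1 (starDist a₀ a₁ c δ) j = fun a => 2⁻¹ * pairInd a₀ a₁ a := by
  funext a
  rw [marg1_starDist h01]
  by_cases ha0 : a = a₀ <;> by_cases ha1 : a = a₁ <;> by_cases hj : j = c <;>
    simp_all [starKernel, pairInd, bsc, Ne.symm h01]

lemma marg2_starDist_of_adj (h01 : a₀ ≠ a₁) {c i j : V} (hadj : (starGraph c).Adj i j)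
    (δ : ℝ) : marg2 (starDist a₀ a₁ c δ) i j = pairDist a₀ a₁ δ := by
  funext ⟨a, b⟩
  rw [marg2_starDist h01 c δ hadj.ne]
  obtain ⟨hij, rfl | rfl⟩ := starGraph_adj.mp hadj <;>
  by_cases ha0 : a = a₀ <;> by_cases ha1 : a = a₁ <;> by_cases hb0 : b = a₀ <;>
    by_cases hb1 : b = a₁ <;>
    simp_all [starKernel, pairInd, bsc, pairDist, Ne.symm h01, Ne.symm hij]

lemma marg2_starDist_of_ne (h01 : a₀ ≠ a₁) {c i j : V} (hi : i ≠ c) (hj : j ≠ c) (hij : i ≠ j)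
    (δ : ℝ) : marg2 (starDist a₀ a₁ c δ) i j = pairDist a₀ a₁ (2 * δ * (1 - δ)) := by
  funext ⟨a, b⟩
  rw [marg2_starDist h01 c δ hij]
  by_cases ha0 : a = a₀ <;> by_cases ha1 : a = a₁ <;> by_cases hb0 : b = a₀ <;>
    by_cases hb1 : b = a₁ <;>
    simp_all [starKernel, pairInd, bsc, pairDist, Ne.symm h01] <;> ring

lemma isMarkovTree_starDist (h01 : a₀ ≠ a₁) (c : V) (δ : ℝ) :
    IsMarkovTree (starGraph c) (starDist a₀ a₁ c δ) := by
  refine isMarkovTree_starGraph_of_eq fun x => ?_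
  have hedge : ∀ j ∈ univ.erase c, edgeFactor (starDist a₀ a₁ c δ) x s(c, j)
      = pairDist a₀ a₁ δ (x c, x j) / (2⁻¹ * pairInd a₀ a₁ (x c) * (2⁻¹ * pairInd a₀ a₁ (x j))) :=
    fun j hj => by
      rw [edgeFactor_mk, marg2_starDist_of_adj h01 (starGraph_center_adj (mem_erase.mp hj).1.symm)]
      simp only [marg1_starDist_eq h01]
  rw [prod_congr rfl hedge, starDist_apply h01]
  simp only [marg1_starDist_eq h01]
  by_cases hx : ∀ i, x i = a₀ ∨ x i = a₁
  · have h1 : ∀ i, pairInd a₀ a₁ (x i) = 1 := fun i => if_pos (hx i)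
    rw [← mul_prod_erase univ _ (mem_univ c)]
    simp only [h1, pairDist, bsc_comm δ (x c), mul_one, one_mul, mul_assoc]
    rw [← prod_mul_distrib]
    exact congrArg _ (prod_congr rfl fun j _ => by field_simp)
  · push Not at hx
    obtain ⟨i, hi0, hi1⟩ := hx
    have h0 : pairInd a₀ a₁ (x i) = 0 := if_neg (by tauto)
    rw [prod_eq_zero (mem_univ i) (by rw [h0, mul_zero]), zero_mul]
    by_cases hic : i = c
    · rw [← hic, h0, mul_zero, zero_mul]
    · rw [prod_eq_zero (mem_erase.mpr ⟨hic, mem_univ i⟩) (by rw [h0, zero_mul]), mul_zero]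

lemma ent_half_pairInd (h01 : a₀ ≠ a₁) : ent (fun a => 2⁻¹ * pairInd a₀ a₁ a) = 1 := by
  simp_rw [ent_eq_sum_negMulLog, mul_comm (2⁻¹ : ℝ), negMulLog_pairInd_mul,
    sum_pairInd_mul h01 (fun _ => negMulLog 2⁻¹), negMulLog_two_inv]
  field_simp
  ring

lemma ent_pairDist (h01 : a₀ ≠ a₁) (γ : ℝ) :
    ent (pairDist a₀ a₁ γ) = 1 + binEntropy γ / log 2 := by
  have hsplit : ∀ a b, negMulLog (pairDist a₀ a₁ γ (a, b))
      = pairInd a₀ a₁ a * (pairInd a₀ a₁ b * negMulLog (2⁻¹ * bsc γ a b)) := fun a b => by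
    rw [← negMulLog_pairInd_mul, ← negMulLog_pairInd_mul, pairDist]
    ring_nf
  rw [ent_eq_sum_negMulLog, Fintype.sum_prod_type]
  simp_rw [hsplit, ← mul_sum, sum_pairInd_mul h01]
  simp only [bsc, if_pos, h01, Ne.symm h01, if_false, negMulLog_mul, negMulLog_two_inv,
    binEntropy_eq_negMulLog_add_negMulLog_one_sub]
  field_simp
  ring

lemma mi_eq_of_pairDist (h01 : a₀ ≠ a₁) {W : Type*} {P : (W → A) → ℝ} {i j : W} {γ : ℝ}
    (hi : marg1 P i = fun a => 2⁻¹ * pairInd a₀ a₁ a)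
    (hj : marg1 P j = fun a => 2⁻¹ * pairInd a₀ a₁ a) (hij : marg2 P i j = pairDist a₀ a₁ γ) :
    mi P i j = 1 - binEntropy γ / log 2 := by
  rw [mi, hi, hj, hij, ent_half_pairInd h01, ent_pairDist h01]
  ring

lemma mi_starDist_of_adj (h01 : a₀ ≠ a₁) {c i j : V} (hadj : (starGraph c).Adj i j) (δ : ℝ) :
    mi (starDist a₀ a₁ c δ) i j = 1 - binEntropy δ / log 2 :=
  mi_eq_of_pairDist h01 (marg1_starDist_eq h01 c δ i) (marg1_starDist_eq h01 c δ j)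
    (marg2_starDist_of_adj h01 hadj δ)

lemma mi_starDist_of_ne (h01 : a₀ ≠ a₁) {c i j : V} (hi : i ≠ c) (hj : j ≠ c) (hij : i ≠ j)
    (δ : ℝ) : mi (starDist a₀ a₁ c δ) i j = 1 - binEntropy (2 * δ * (1 - δ)) / log 2 :=
  mi_eq_of_pairDist h01 (marg1_starDist_eq h01 c δ i) (marg1_starDist_eq h01 c δ j)
    (marg2_starDist_of_ne h01 hi hj hij δ)

/-- Two leaves of the star are joined through two channels `bsc δ`, i.e. by `bsc (2δ(1-δ))`. -/
def starThreshold (δ : ℝ) : ℝ := (binEntropy (2 * δ * (1 - δ)) - binEntropy δ) / (2 * log 2)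

lemma thresh_starDist (h01 : a₀ ≠ a₁) {c u v : V} (hu : u ≠ c) (hv : v ≠ c) (huv : u ≠ v)
    (δ : ℝ) : thresh (starGraph c) (mi (starDist a₀ a₁ c δ)) = starThreshold δ := by
  have hgaps : {x : ℝ | ∃ w wb u ub : V, EVtuple (starGraph c) w wb u ub ∧
      x = mi (starDist a₀ a₁ c δ) w wb - mi (starDist a₀ a₁ c δ) u ub} = {2 * starThreshold δ} := by
    ext x
    simp only [Set.mem_ofPred_eq, Set.mem_singleton_iff]
    constructor
    · rintro ⟨w, wb, u', ub, ⟨hadj, p, hp, -, hlen⟩, rfl⟩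
      obtain ⟨hne, hnadj⟩ := (isAcyclic_starGraph c).ne_and_not_adj_of_two_le_length hp hlen
      have hleaves : u' ≠ c ∧ ub ≠ c := by
        rw [starGraph_adj] at hnadj
        tauto
      rw [mi_starDist_of_adj h01 hadj, mi_starDist_of_ne h01 hleaves.1 hleaves.2 hne, starThreshold]
      field_simp
      ring
    · rintro rfl
      have huc : (starGraph c).Adj u c := starGraph_center_adj' hu.symm
      have hcv : (starGraph c).Adj c v := starGraph_center_adj hv.symm
      refine ⟨u, c, u, v, ⟨huc, .cons huc (.cons hcv .nil), ?_, by simp, le_rfl⟩, ?_⟩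
      · simp [Walk.isPath_def, hu, huv, hv.symm]
      · rw [mi_starDist_of_adj h01 huc, mi_starDist_of_ne h01 hu hv huv, starThreshold]
        field_simp
        ring
  rw [thresh, hgaps, csInf_singleton]
  ring

end StarModel

lemma starThreshold_pos {δ : ℝ} (hδ : δ ∈ Set.Ioo 0 2⁻¹) : 0 < starThreshold δ := by
  obtain ⟨h0, h1⟩ := hδ
  refine div_pos (sub_pos.mpr (binEntropy_strictMonoOn ⟨h0.le, h1.le⟩ ⟨by nlinarith, ?_⟩ ?_))
    (by positivity)
  · nlinarith [sq_nonneg (2 * δ - 1)]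
  · nlinarith

lemma eventually_starThreshold_le {η : ℝ} (hη : 0 < η) :
    ∀ᶠ δ in 𝓝[<] (2⁻¹ : ℝ), δ ∈ Set.Ioo 0 2⁻¹ ∧ starThreshold δ ≤ η := by
  have hcont : Continuous starThreshold := by
    unfold starThreshold
    fun_prop
  have hzero : starThreshold 2⁻¹ = 0 := by norm_num [starThreshold]
  have hIoo : ∀ᶠ δ in 𝓝[<] (2⁻¹ : ℝ), δ ∈ Set.Ioo 0 2⁻¹ := Ioo_mem_nhdsLT (by norm_num)
  exact hIoo.and (nhdsWithin_le_nhds ((hcont.tendsto 2⁻¹).eventually (ge_mem_nhds (hzero ▸ hη))))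

section Minimax

variable {p : ℕ} {X : Type*} [Fintype X]

lemma exists_mem_modelClass_starDist {a₀ a₁ : X} (h01 : a₀ ≠ a₁) {c u v : Fin p} (hu : u ≠ c)
    (hv : v ≠ c) (huv : u ≠ v) {δ η : ℝ} (hδ : δ ∈ Set.Ioo 0 2⁻¹) (hη : starThreshold δ ≤ η) :
    ∃ M ∈ modelClass p X η, M.tree = starGraph c ∧ M.dist = starDist a₀ a₁ c δ := by
  have hprob : IsProbDist (starDist a₀ a₁ c δ) :=
    ⟨starDist_nonneg ⟨hδ.1.le, by linarith [hδ.2]⟩ c, by rw [tsum_fintype, sum_starDist h01]⟩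
  refine ⟨⟨starGraph c, isTree_starGraph c, _, hprob, isMarkovTree_starDist h01 c δ⟩, ?_, rfl, rfl⟩
  rw [modelClass, Set.mem_ofPred_eq, thresh_starDist h01 hu hv huv]
  exact ⟨starThreshold_pos hδ, hη⟩

lemma nonempty_modelClass (hp : 3 ≤ p) (hX : 2 ≤ Fintype.card X) {η : ℝ} (hη : 0 < η) :
    (modelClass p X η).Nonempty := by
  obtain ⟨a₀, a₁, h01⟩ := Fintype.exists_pair_of_one_lt_card hX
  obtain ⟨c, u, v, hcu, hcv, huv⟩ :=
    Fintype.two_lt_card_iff.mp (by rwa [Fintype.card_fin] : 2 < Fintype.card (Fin p))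
  obtain ⟨δ, hδ, hδη⟩ := (eventually_starThreshold_le hη).exists
  obtain ⟨M, hM, -⟩ := exists_mem_modelClass_starDist h01 hcu.symm hcv.symm huv hδ hδη
  exact ⟨M, hM⟩

variable (n : ℕ) (Φ : (Fin n → Fin p → X) → {G : SimpleGraph (Fin p) // G.IsTree})

lemma le_errSup {η : ℝ} {M : TreeModel p X} (hM : M ∈ modelClass p X η) :
    probn M.dist n {ω | (Φ ω).1 ≠ M.tree} ≤ errSup p X n Φ η := by
  refine le_csSup ⟨1, ?_⟩ ⟨M, hM, rfl⟩
  rintro _ ⟨M', -, rfl⟩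
  exact probn_le_one M'.prob.1 ((tsum_fintype _).symm.trans M'.prob.2) n _

lemma errSup_mono {η η' : ℝ} (hne : (modelClass p X η).Nonempty) (h : η ≤ η') :
    errSup p X n Φ η ≤ errSup p X n Φ η' := by
  obtain ⟨M, hM⟩ := hne
  refine csSup_le ⟨_, M, hM, rfl⟩ ?_
  rintro _ ⟨M', hM', rfl⟩
  exact le_errSup n Φ ⟨hM'.1, hM'.2.trans h⟩

/-- Le Cam's two-point bound. -/
lemma probn_add_probn_compl_le_two_mul_errSup {η : ℝ} {M₀ M₁ : TreeModel p X}
    (h₀ : M₀ ∈ modelClass p X η) (h₁ : M₁ ∈ modelClass p X η) (hT : M₀.tree ≠ M₁.tree) :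
    probn M₀.dist n {ω | (Φ ω).1 ≠ M₀.tree} + probn M₁.dist n {ω | (Φ ω).1 ≠ M₀.tree}ᶜ
      ≤ 2 * errSup p X n Φ η := by
  have hsub : {ω | (Φ ω).1 ≠ M₀.tree}ᶜ ⊆ {ω | (Φ ω).1 ≠ M₁.tree} := fun ω hω => by
    simp_all
  linarith [le_errSup n Φ h₀, le_errSup n Φ h₁, probn_mono M₁.prob.1 n hsub]

lemma half_le_errSup (hp : 3 ≤ p) (hX : 2 ≤ Fintype.card X) {η : ℝ} (hη : 0 < η) :
    1 / 2 ≤ errSup p X n Φ η := by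
  obtain ⟨a₀, a₁, h01⟩ := Fintype.exists_pair_of_one_lt_card hX
  obtain ⟨c₀, c₁, w, h01c, hw₀, hw₁⟩ :=
    Fintype.two_lt_card_iff.mp (by rwa [Fintype.card_fin] : 2 < Fintype.card (Fin p))
  set E : Set (Fin n → Fin p → X) := {ω | (Φ ω).1 ≠ starGraph c₀}
  set G : ℝ → ℝ := fun δ => probn (starDist a₀ a₁ c₀ δ) n E + probn (starDist a₀ a₁ c₁ δ) n Eᶜ
  -- At `δ = 1/2` both star models are the uniform distribution on `{a₀, a₁}^p`.
  have hG : G 2⁻¹ = 1 := by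
    have hsame : starDist a₀ a₁ c₁ 2⁻¹ = starDist a₀ a₁ c₀ 2⁻¹ := funext fun x => by
      rw [starDist_two_inv h01, starDist_two_inv h01]
    simp only [G, hsame]
    exact probn_add_probn_compl (sum_starDist h01 c₀ _) n E
  have hlim : Tendsto G (𝓝[<] 2⁻¹) (𝓝 1) := by
    have hcont : Continuous G :=
      (continuous_probn (fun x => continuous_starDist c₀ x) n E).add
        (continuous_probn (fun x => continuous_starDist c₁ x) n Eᶜ)
    exact hG ▸ hcont.continuousAt.tendsto.mono_left nhdsWithin_le_nhds
  have hbound : ∀ᶠ δ in 𝓝[<] 2⁻¹, G δ ≤ 2 * errSup p X n Φ η := by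
    filter_upwards [eventually_starThreshold_le hη] with δ ⟨hδ, hδη⟩
    obtain ⟨M₀, hM₀, hT₀, hP₀⟩ := exists_mem_modelClass_starDist h01 h01c.symm hw₀.symm hw₁ hδ hδη
    obtain ⟨M₁, hM₁, hT₁, hP₁⟩ := exists_mem_modelClass_starDist h01 h01c hw₁.symm hw₀ hδ hδη
    have hT : M₀.tree ≠ M₁.tree := by
      rw [hT₀, hT₁]
      exact starGraph_ne_starGraph h01c hw₀.symm hw₁.symm
    simpa [G, E, hT₀, hP₀, hP₁] using probn_add_probn_compl_le_two_mul_errSup n Φ hM₀ hM₁ hT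
  linarith [le_of_tendsto hlim hbound]

end Minimax

/-- **Theorem 3: minimax converse as the information threshold vanishes.**
For `p` odd, `p > 1`, a finite alphabet with at least two symbols, any finite
sample size `n` and any tree estimator `Φ`, the limit as `η ↓ 0` of the worst-case
probability of incorrect structure recovery over the class `C_η^𝒯` exists and is
at least `1/2`.  (Taking the infimum over all estimators `Φ` then preserves the
bound `≥ 1/2`.) -/
theorem minimax_converse (p : ℕ) (hodd : Odd p) (hp : 1 < p)
    (X : Type*) [Fintype X] (hX : 2 ≤ Fintype.card X)
    (n : ℕ) (Φ : (Fin n → Fin p → X) → {G : SimpleGraph (Fin p) // G.IsTree}) :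
    ∃ L : ℝ,
      Filter.Tendsto (errSup p X n Φ) (nhdsWithin 0 (Set.Ioi 0)) (nhds L) ∧
      1 / 2 ≤ L := by
  have hp3 : 3 ≤ p := by
    obtain ⟨k, rfl⟩ := hodd
    omega
  exact exists_tendsto_nhdsGT_of_monotoneOn
    (fun η hη η' _ h => errSup_mono n Φ (nonempty_modelClass hp3 hX hη) h)
    (fun η hη => half_le_errSup n Φ hp3 hX hη)

end TreePaper
end
end

section
/- (KL divergence between tree models differing in one edge equals a mutual information gap.) Let X = (X_1, …, X_p) be discrete random variables and let M_0 be a distribution p_{M_0} on X^p that is Markov with respect to the path (Markov chain) X_1 − X_2 − ⋯ − X_p. For an index i, let M_i be the tree-structured distribution p_{M_i} that is Markov with respect to the tree obtained from the path by replacing edge (i, i+1) with edge (i−1, i+1), whose pairwise edge marginals satisfy p_{M_i}(x_{k+1}, x_k) = p_{M_0}(x_{k+1}, x_k) for every edge (k, k+1) shared with M_0 (k ≠ i) and p_{M_i}(x_{i+1}, x_{i−1}) = p_{M_0}(x_{i+1}, x_{i−1}). Then D_KL( p_{M_0} ‖ p_{M_i} ) = I_{M_0}(X_{i+1}; X_i)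 − I_{M_0}(X_{i+1}; X_{i−1}), where the mutual informations are computed under p_{M_0}. -/
set_option linter.unusedSectionVars false

open scoped Classical

noncomputable section

namespace TreePaper

variable {V : Type*} [Fintype V] [DecidableEq V] {A : Type*}

/-- Kullback–Leibler divergence (base 2) between two pmfs. -/
def klDivF {α : Type*} (P Q : α → ℝ) : ℝ :=
  ∑' a, P a * Real.logb 2 (P a / Q a)

/-- The Markov chain (path graph) `X_1 − X_2 − ⋯ − X_p` on `Fin p`. -/
def chainGraph (p : ℕ) : SimpleGraph (Fin p) :=
  SimpleGraph.fromRel (fun a b => (a : ℕ) + 1 = (b : ℕ))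

/-- The tree obtained from the path graph on `Fin p` by replacing the edge
`(i, i+1)` with the edge `(i−1, i+1)`;  here `im, i, ip` denote the consecutive
nodes `i−1, i, i+1`. -/
def swapGraph (p : ℕ) (im i ip : Fin p) : SimpleGraph (Fin p) :=
  SimpleGraph.fromRel
    (fun a b => ((a : ℕ) + 1 = (b : ℕ) ∧ a ≠ i) ∨ (a = im ∧ b = ip))

section Aux

variable {X : Type*} [Fintype X]

lemma marg1_eq_sum (P : (V → X) → ℝ) (k : V) (a : X) :
    marg1 P k a = ∑ x : V → X, if x k = a then P x else 0 := tsum_fintype _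

lemma marg2_eq_sum (P : (V → X) → ℝ) (i j : V) (ab : X × X) :
    marg2 P i j ab = ∑ x : V → X, if x i = ab.1 ∧ x j = ab.2 then P x else 0 := tsum_fintype _

lemma ent_eq_sum (f : X → ℝ) : ent f = -∑ a, f a * Real.logb 2 (f a) := by
  rw [ent, tsum_fintype]

lemma ent2_eq_sum (f : X × X → ℝ) :
    ent f = -∑ a, ∑ b, f (a, b) * Real.logb 2 (f (a, b)) := by
  rw [ent, tsum_fintype, Fintype.sum_prod_type]

lemma sum_marg2_fst (P : (V → X) → ℝ) (i j : V) (a : X) :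
    ∑ b : X, marg2 P i j (a, b) = marg1 P i a := by
  simp only [marg2_eq_sum, marg1_eq_sum]
  rw [Finset.sum_comm]
  refine Finset.sum_congr rfl fun x _ => ?_
  by_cases h : x i = a
  · simp [h, ite_and, Finset.sum_ite_eq]
  · simp [h, ite_and]

lemma sum_marg2_snd (P : (V → X) → ℝ) (i j : V) (b : X) :
    ∑ a : X, marg2 P i j (a, b) = marg1 P j b := by
  simp only [marg2_eq_sum, marg1_eq_sum]
  rw [Finset.sum_comm]
  refine Finset.sum_congr rfl fun x _ => ?_
  by_cases h : x j = b
  · simp [h, ite_and, Finset.sum_ite_eq]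
  · simp [h, ite_and]

lemma marg1_pos (P : (V → X) → ℝ) (hpos : ∀ x, 0 < P x) (k : V) (a : X) :
    0 < marg1 P k a := by
  rw [marg1_eq_sum]
  refine Finset.sum_pos' (fun x _ => ?_) ⟨fun _ => a, Finset.mem_univ _, ?_⟩
  · split <;> simp [(hpos x).le]
  · simp [hpos]

lemma marg2_pos (P : (V → X) → ℝ) (hpos : ∀ x, 0 < P x) (i j : V) (hij : i ≠ j)
    (a b : X) : 0 < marg2 P i j (a, b) := by
  rw [marg2_eq_sum]
  refine Finset.sum_pos' (fun x _ => ?_)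
    ⟨Function.update (fun _ => a) j b, Finset.mem_univ _, ?_⟩
  · split <;> simp [(hpos x).le]
  · simp [Function.update_apply, hij, hpos]

lemma sum_pair (P : (V → X) → ℝ) (i j : V) (f : X → X → ℝ) :
    ∑ x : V → X, P x * f (x i) (x j) = ∑ a : X, ∑ b : X, marg2 P i j (a, b) * f a b := by
  have h : ∀ x : V → X, P x * f (x i) (x j)
      = ∑ ab : X × X, (if x i = ab.1 ∧ x j = ab.2 then P x else 0) * f ab.1 ab.2 := by
    intro x
    rw [Finset.sum_eq_single (x i, x j)]
    · simp
    · intro ab _ hne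
      have hn : ¬(x i = ab.1 ∧ x j = ab.2) := by
        rintro ⟨h1, h2⟩; exact hne (by cases ab; simp_all)
      simp [hn]
    · simp
  simp only [h]
  rw [Finset.sum_comm, Fintype.sum_prod_type]
  refine Finset.sum_congr rfl fun a _ => Finset.sum_congr rfl fun b _ => ?_
  rw [marg2_eq_sum, Finset.sum_mul]

lemma sum_mul_logb_factor (P : (V → X) → ℝ) (hpos : ∀ x, 0 < P x) (i j : V)
    (hij : i ≠ j) :
    ∑ x : V → X, P x *
        Real.logb 2 (marg2 P i j (x i, x j) / (marg1 P i (x i) * marg1 P j (x j)))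
      = mi P i j := by
  rw [sum_pair P i j
    (fun a b => Real.logb 2 (marg2 P i j (a, b) / (marg1 P i a * marg1 P j b)))]
  have key : ∀ a b : X,
      marg2 P i j (a, b) * Real.logb 2 (marg2 P i j (a, b) / (marg1 P i a * marg1 P j b))
        = marg2 P i j (a, b) * Real.logb 2 (marg2 P i j (a, b))
          - marg2 P i j (a, b) * Real.logb 2 (marg1 P i a)
          - marg2 P i j (a, b) * Real.logb 2 (marg1 P j b) := by
    intro a b
    rw [Real.logb_div (marg2_pos P hpos i j hij a b).ne'
        (mul_pos (marg1_pos P hpos i a) (marg1_pos P hpos j b)).ne',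
      Real.logb_mul (marg1_pos P hpos i a).ne' (marg1_pos P hpos j b).ne']
    ring
  simp only [key, Finset.sum_sub_distrib]
  have h1 : ∀ a : X, ∑ b : X, marg2 P i j (a, b) * Real.logb 2 (marg1 P i a)
      = marg1 P i a * Real.logb 2 (marg1 P i a) := by
    intro a; rw [← Finset.sum_mul, sum_marg2_fst]
  have h2 : ∑ a : X, ∑ b : X, marg2 P i j (a, b) * Real.logb 2 (marg1 P j b)
      = ∑ b : X, marg1 P j b * Real.logb 2 (marg1 P j b) := by
    rw [Finset.sum_comm]
    refine Finset.sum_congr rfl fun b _ => ?_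
    rw [← Finset.sum_mul, sum_marg2_snd]
  simp only [h1]
  rw [h2, mi, ent_eq_sum, ent_eq_sum, ent2_eq_sum]
  ring

end Aux

/-- **KL divergence between tree models differing in one edge equals a mutual
information gap.**  If `P0` is Markov w.r.t. the path `X_1 − ⋯ − X_p`, and `Pi`
is Markov w.r.t. the tree obtained by replacing the edge `(i, i+1)` with
`(i−1, i+1)`, with matched pairwise edge marginals, then
`D_KL(P0 ‖ Pi) = I_{M_0}(X_{i+1}; X_i) − I_{M_0}(X_{i+1}; X_{i−1})`. -/
theorem kl_one_edge_perturbation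
    (p : ℕ) {X : Type*} [Fintype X]
    (im i ip : Fin p) (him : (im : ℕ) + 1 = (i : ℕ)) (hip : (i : ℕ) + 1 = (ip : ℕ))
    (P0 Pi : (Fin p → X) → ℝ)
    (hP0 : IsProbDist P0) (hPi : IsProbDist Pi)
    (hpos0 : ∀ x, 0 < P0 x) (hposi : ∀ x, 0 < Pi x)
    (hM0 : IsMarkovTree (chainGraph p) P0)
    (hMi : IsMarkovTree (swapGraph p im i ip) Pi)
    (hmatch : ∀ a b : Fin p, (a : ℕ) + 1 = (b : ℕ) → a ≠ i →
      marg2 Pi b a = marg2 P0 b a)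
    (hmatch' : marg2 Pi ip im = marg2 P0 ip im) :
    klDivF P0 Pi = mi P0 ip i - mi P0 ip im := by
  classical
  have hvim : (im:ℕ) < p := im.isLt
  have hvi : (i:ℕ) < p := i.isLt
  have hvip : (ip:ℕ) < p := ip.isLt
  have hne_imi : im ≠ i := by intro h; rw [Fin.ext_iff] at h; omega
  have hne_iip : i ≠ ip := by intro h; rw [Fin.ext_iff] at h; omega
  have hne_imip : im ≠ ip := by intro h; rw [Fin.ext_iff] at h; omega
  -- all single-site marginals agree
  have hm1 : ∀ k, marg1 Pi k = marg1 P0 k := by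
    intro k
    by_cases hk1 : k = i
    · subst hk1
      funext a
      rw [← sum_marg2_fst Pi k im a, ← sum_marg2_fst P0 k im a, hmatch im k him hne_imi]
    by_cases hk2 : k = ip
    · subst hk2
      funext a
      rw [← sum_marg2_fst Pi k im a, ← sum_marg2_fst P0 k im a, hmatch']
    by_cases hk3 : (k:ℕ)+1 < p
    · funext a
      rw [← sum_marg2_snd Pi ⟨(k:ℕ)+1, hk3⟩ k a, ← sum_marg2_snd P0 ⟨(k:ℕ)+1, hk3⟩ k a,
        hmatch k ⟨(k:ℕ)+1, hk3⟩ rfl hk1]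
    · have hkval : (k:ℕ) = p - 1 := by omega
      have hk0 : 1 ≤ (k:ℕ) := by omega
      have hklt : (k:ℕ) - 1 < p := by omega
      have hkk : ((⟨(k:ℕ)-1, hklt⟩ : Fin p):ℕ) + 1 = (k:ℕ) := by simp; omega
      have hk'i : (⟨(k:ℕ)-1, hklt⟩ : Fin p) ≠ i := by
        intro h
        rw [Fin.ext_iff] at h
        simp at h
        exact hk2 (Fin.ext (by omega))
      funext a
      rw [← sum_marg2_fst Pi k ⟨(k:ℕ)-1, hklt⟩ a, ← sum_marg2_fst P0 k ⟨(k:ℕ)-1, hklt⟩ a,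
        hmatch _ k hkk hk'i]
  -- the special edges
  have he1 : s(i, ip) ∈ (chainGraph p).edgeSet := by
    rw [SimpleGraph.mem_edgeSet, chainGraph, SimpleGraph.fromRel_adj]
    exact ⟨hne_iip, Or.inl hip⟩
  have he2 : s(im, ip) ∈ (swapGraph p im i ip).edgeSet := by
    rw [SimpleGraph.mem_edgeSet, swapGraph, SimpleGraph.fromRel_adj]
    exact ⟨hne_imip, Or.inl (Or.inr ⟨rfl, rfl⟩)⟩
  -- the two edge sets agree away from the special edges
  have hedge : ∀ e : Sym2 (Fin p),
      (e ∈ (chainGraph p).edgeSet ∧ e ≠ s(i, ip)) ↔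
      (e ∈ (swapGraph p im i ip).edgeSet ∧ e ≠ s(im, ip)) := by
    intro e
    induction e using Sym2.ind with
    | _ a b =>
      simp only [SimpleGraph.mem_edgeSet, chainGraph, swapGraph, SimpleGraph.fromRel_adj,
        ne_eq, Sym2.eq_iff, Fin.ext_iff, not_or, not_and]
      omega
  -- edge factors of Pi agree with those of P0 on the edges of the swap graph
  have hfac : ∀ (x : Fin p → X) (e : Sym2 (Fin p)),
      e ∈ (swapGraph p im i ip).edgeSet → edgeFactor Pi x e = edgeFactor P0 x e := by
    intro x e he
    induction e using Sym2.ind with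
    | _ a b =>
      rw [SimpleGraph.mem_edgeSet, swapGraph, SimpleGraph.fromRel_adj] at he
      have hm2 : marg2 Pi a b = marg2 P0 a b := by
        rcases he.2 with (⟨h1, h2⟩ | ⟨h1, h2⟩) | (⟨h1, h2⟩ | ⟨h1, h2⟩)
        · funext uv
          obtain ⟨u, v⟩ := uv
          rw [marg2_symm Pi a b, hmatch a b h1 h2, ← marg2_symm P0 a b]
        · funext uv
          obtain ⟨u, v⟩ := uv
          rw [marg2_symm Pi a b, h1, h2, hmatch', marg2_symm P0 ip im]
        · exact hmatch b a h1 h2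
        · rw [h1, h2]; exact hmatch'
      simp only [edgeFactor, Sym2.lift_mk]
      rw [hm2, hm1 a, hm1 b]
  -- splitting off one factor of the edge product
  have hsplit : ∀ (Q : (Fin p → X) → ℝ) (x : Fin p → X) (T : SimpleGraph (Fin p))
      (e0 : Sym2 (Fin p)), e0 ∈ T.edgeSet →
      (∏ e : Sym2 (Fin p), if e ∈ T.edgeSet then edgeFactor Q x e else 1)
        = (∏ e : Sym2 (Fin p), if e ∈ T.edgeSet ∧ e ≠ e0 then edgeFactor Q x e else 1) *
            edgeFactor Q x e0 := by
    intro Q x T e0 he0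
    have hpt : ∀ e : Sym2 (Fin p), (if e ∈ T.edgeSet then edgeFactor Q x e else 1)
        = (if e ∈ T.edgeSet ∧ e ≠ e0 then edgeFactor Q x e else 1) *
            (if e = e0 then edgeFactor Q x e else 1) := by
      intro e
      by_cases h : e = e0
      · subst h; simp [he0]
      · simp [h]
    rw [Finset.prod_congr rfl (fun e _ => hpt e), Finset.prod_mul_distrib]
    congr 1
    rw [Finset.prod_eq_single e0]
    · simp
    · intro e _ hne; simp [hne]
    · simp
  -- the two factorizations, with a common part
  have hD0 : ∀ x : Fin p → X, P0 x = ((∏ k, marg1 P0 k (x k)) *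
      ∏ e : Sym2 (Fin p), if e ∈ (chainGraph p).edgeSet ∧ e ≠ s(i, ip) then
        edgeFactor P0 x e else 1) * edgeFactor P0 x s(i, ip) := by
    intro x
    rw [hM0 x, hsplit P0 x _ _ he1, mul_assoc]
  have hDi : ∀ x : Fin p → X, Pi x = ((∏ k, marg1 P0 k (x k)) *
      ∏ e : Sym2 (Fin p), if e ∈ (chainGraph p).edgeSet ∧ e ≠ s(i, ip) then
        edgeFactor P0 x e else 1) * edgeFactor P0 x s(im, ip) := by
    intro x
    rw [hMi x, hsplit Pi x _ _ he2]
    have hprod : (∏ e : Sym2 (Fin p), if e ∈ (swapGraph p im i ip).edgeSet ∧ e ≠ s(im, ip)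
          then edgeFactor Pi x e else 1)
        = ∏ e : Sym2 (Fin p), if e ∈ (chainGraph p).edgeSet ∧ e ≠ s(i, ip) then
            edgeFactor P0 x e else 1 := by
      refine Finset.prod_congr rfl fun e _ => ?_
      by_cases h : e ∈ (swapGraph p im i ip).edgeSet ∧ e ≠ s(im, ip)
      · rw [if_pos h, if_pos ((hedge e).mpr h), hfac x e h.1]
      · rw [if_neg h, if_neg (fun h' => h ((hedge e).mp h'))]
    rw [hprod, hfac x _ he2]
    simp only [hm1]
    ring
  -- explicit forms and positivity of the two special edge factors
  have hf1 : ∀ x : Fin p → X, edgeFactor P0 x s(i, ip)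
      = marg2 P0 ip i (x ip, x i) / (marg1 P0 ip (x ip) * marg1 P0 i (x i)) := by
    intro x
    rw [show s(i, ip) = s(ip, i) from Sym2.eq_swap]
    simp only [edgeFactor, Sym2.lift_mk]
  have hf2 : ∀ x : Fin p → X, edgeFactor P0 x s(im, ip)
      = marg2 P0 ip im (x ip, x im) / (marg1 P0 ip (x ip) * marg1 P0 im (x im)) := by
    intro x
    rw [show s(im, ip) = s(ip, im) from Sym2.eq_swap]
    simp only [edgeFactor, Sym2.lift_mk]
  have hf1pos : ∀ x : Fin p → X, 0 < edgeFactor P0 x s(i, ip) := by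
    intro x
    rw [hf1 x]
    exact div_pos (marg2_pos P0 hpos0 ip i hne_iip.symm _ _)
      (mul_pos (marg1_pos P0 hpos0 ip _) (marg1_pos P0 hpos0 i _))
  have hf2pos : ∀ x : Fin p → X, 0 < edgeFactor P0 x s(im, ip) := by
    intro x
    rw [hf2 x]
    exact div_pos (marg2_pos P0 hpos0 ip im hne_imip.symm _ _)
      (mul_pos (marg1_pos P0 hpos0 ip _) (marg1_pos P0 hpos0 im _))
  -- the likelihood ratio
  have hratio : ∀ x : Fin p → X,
      P0 x / Pi x = edgeFactor P0 x s(i, ip) / edgeFactor P0 x s(im, ip) := by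
    intro x
    have hDne : ((∏ k, marg1 P0 k (x k)) *
        ∏ e : Sym2 (Fin p), if e ∈ (chainGraph p).edgeSet ∧ e ≠ s(i, ip) then
          edgeFactor P0 x e else 1) ≠ 0 := by
      intro h
      have h0 := hpos0 x
      rw [hD0 x, h, zero_mul] at h0
      exact lt_irrefl 0 h0
    rw [hD0 x, hDi x, mul_comm _ (edgeFactor P0 x s(i, ip)),
      mul_comm _ (edgeFactor P0 x s(im, ip)), mul_div_mul_right _ _ hDne]
  -- put everything together
  have hterm : ∀ x : Fin p → X, P0 x * Real.logb 2 (P0 x / Pi x)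
      = P0 x * Real.logb 2
            (marg2 P0 ip i (x ip, x i) / (marg1 P0 ip (x ip) * marg1 P0 i (x i)))
        - P0 x * Real.logb 2
            (marg2 P0 ip im (x ip, x im) / (marg1 P0 ip (x ip) * marg1 P0 im (x im))) := by
    intro x
    rw [hratio x, Real.logb_div (hf1pos x).ne' (hf2pos x).ne', mul_sub, hf1 x, hf2 x]
  rw [klDivF, tsum_fintype, Finset.sum_congr rfl (fun x _ => hterm x),
    Finset.sum_sub_distrib, sum_mul_logb_factor P0 hpos0 ip i hne_iip.symm,
    sum_mul_logb_factor P0 hpos0 ip im hne_imip.symm]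

end TreePaper
end
end

section
/- (Reverse KL identity for the one-edge perturbation with uniform marginals.) In the setting where p_{M_0} is Markov with respect to the path X_1 − ⋯ − X_p and p_{M_i} is Markov with respect to the tree obtained by replacing edge (i, i+1) with (i−1, i+1), with matched pairwise marginals p_{M_i}(x_{k+1}, x_k) = p_{M_0}(x_{k+1}, x_k) for k ≠ i and p_{M_i}(x_{i+1}, x_{i−1}) = p_{M_0}(x_{i+1}, x_{i−1}), and with all single-node marginals uniform on the common finite alphabet X, it holds that D_KL( p_{M_i} ‖ p_{M_0} ) − D_KL( p_{M_i}(x_{i+1}, x_i) ‖ p_{M_0}(x_{i+1}, x_i) ) = I_{M_i}(X_{i+1}; X_{i−1}) − I_{M_i}(X_{i+1}; X_i), where the mutual informations are computed under p_{M_i}. -/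
set_option linter.unusedSectionVars false

open scoped Classical

noncomputable section

namespace TreePaper

variable {V : Type*} [Fintype V] [DecidableEq V] {A : Type*}

section AuxLemmas

variable {V : Type*} [Fintype V] [DecidableEq V] {A : Type*} [Fintype A]

lemma marg2_fin (P : (V → A) → ℝ) (s t : V) (ab : A × A) :
    marg2 P s t ab = ∑ x : V → A, if x s = ab.1 ∧ x t = ab.2 then P x else 0 := tsum_fintype _

lemma marg2_pos_s12 (P : (V → A) → ℝ) (hP : ∀ x, 0 < P x) {s t : V} (hst : s ≠ t) (ab : A × A) :
    0 < marg2 P s t ab := by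
  rw [marg2_fin]
  have h0 : (fun k => if k = s then ab.1 else ab.2) s = ab.1 ∧
      (fun k => if k = s then ab.1 else ab.2) t = ab.2 := by
    constructor <;> simp [hst.symm]
  refine Finset.sum_pos' (fun x _ => ?_)
    ⟨fun k => if k = s then ab.1 else ab.2, Finset.mem_univ _, ?_⟩
  · split
    · exact (hP x).le
    · exact le_refl 0
  · rw [if_pos h0]; exact hP _

lemma sum_marg2_mul (P : (V → A) → ℝ) (s t : V) (g : A × A → ℝ) :
    ∑ ab : A × A, marg2 P s t ab * g ab = ∑ x : V → A, P x * g (x s, x t) := by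
  have key : ∀ x : V → A,
      (∑ ab : A × A, if x s = ab.1 ∧ x t = ab.2 then P x * g ab else 0) = P x * g (x s, x t) := by
    intro x
    refine (Finset.sum_eq_single (x s, x t) ?_ ?_).trans (by simp)
    · rintro ⟨a, b⟩ - hne
      simp only [ite_eq_right_iff]
      rintro ⟨rfl, rfl⟩
      exact absurd rfl hne
    · intro h; exact absurd (Finset.mem_univ _) h
  calc ∑ ab : A × A, marg2 P s t ab * g ab
      = ∑ ab : A × A, ∑ x : V → A, (if x s = ab.1 ∧ x t = ab.2 then P x * g ab else 0) := by
        refine Finset.sum_congr rfl fun ab _ => ?_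
        rw [marg2_fin, Finset.sum_mul]
        exact Finset.sum_congr rfl fun x _ => by split <;> simp
    _ = ∑ x : V → A, ∑ ab : A × A, (if x s = ab.1 ∧ x t = ab.2 then P x * g ab else 0) :=
        Finset.sum_comm
    _ = _ := Finset.sum_congr rfl fun x _ => key x

end AuxLemmas

/-- **Reverse KL identity for the one-edge perturbation with uniform marginals.**
In the setting of the one-edge perturbation, if moreover all single-node marginals
of both models are uniform on the common finite alphabet `X`, then
`D_KL(Pi ‖ P0) − D_KL(p_{M_i}(x_{i+1}, x_i) ‖ p_{M_0}(x_{i+1}, x_i))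
  = I_{M_i}(X_{i+1}; X_{i−1}) − I_{M_i}(X_{i+1}; X_i)`. -/
theorem kl_reverse_one_edge_perturbation
    (p : ℕ) {X : Type*} [Fintype X] [Nonempty X]
    (im i ip : Fin p) (him : (im : ℕ) + 1 = (i : ℕ)) (hip : (i : ℕ) + 1 = (ip : ℕ))
    (P0 Pi : (Fin p → X) → ℝ)
    (hP0 : IsProbDist P0) (hPi : IsProbDist Pi)
    (hpos0 : ∀ x, 0 < P0 x) (hposi : ∀ x, 0 < Pi x)
    (hM0 : IsMarkovTree (chainGraph p) P0)
    (hMi : IsMarkovTree (swapGraph p im i ip) Pi)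
    (hmatch : ∀ a b : Fin p, (a : ℕ) + 1 = (b : ℕ) → a ≠ i →
      marg2 Pi b a = marg2 P0 b a)
    (hmatch' : marg2 Pi ip im = marg2 P0 ip im)
    (hunif0 : ∀ (s : Fin p) (a : X), marg1 P0 s a = 1 / (Fintype.card X : ℝ))
    (hunifi : ∀ (s : Fin p) (a : X), marg1 Pi s a = 1 / (Fintype.card X : ℝ)) :
    klDivF Pi P0 - klDivF (marg2 Pi ip i) (marg2 P0 ip i)
      = mi Pi ip im - mi Pi ip i := by
  classical
  -- basic distinctness facts
  have hiip : i ≠ ip := fun h => by rw [h] at hip; omega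
  have himip : im ≠ ip := fun h => by rw [h] at him; omega
  have himi : im ≠ i := fun h => by rw [h] at him; omega
  have he12 : s(im, ip) ≠ s(i, ip) := by
    intro hh
    rw [Sym2.eq_iff] at hh
    obtain ⟨h, -⟩ | ⟨h, -⟩ := hh
    · exact himi h
    · exact himip h
  -- edge membership facts
  have he1mem : s(im, ip) ∈ (swapGraph p im i ip).edgeSet := by
    simp only [swapGraph, SimpleGraph.mem_edgeSet, SimpleGraph.fromRel_adj]
    refine ⟨himip, Or.inl (Or.inr ?_)⟩
    simp
  have he2mem : s(i, ip) ∈ (chainGraph p).edgeSet := by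
    simp only [chainGraph, SimpleGraph.mem_edgeSet, SimpleGraph.fromRel_adj]
    exact ⟨hiip, Or.inl hip⟩
  have he2notswap : s(i, ip) ∉ (swapGraph p im i ip).edgeSet := by
    simp only [swapGraph, SimpleGraph.mem_edgeSet, SimpleGraph.fromRel_adj]
    rintro ⟨-, (⟨-, h⟩ | ⟨h, -⟩) | (⟨h, -⟩ | ⟨h, -⟩)⟩
    · exact h rfl
    · exact himi h.symm
    · omega
    · exact himip h.symm
  have he1notchain : s(im, ip) ∉ (chainGraph p).edgeSet := by
    simp only [chainGraph, SimpleGraph.mem_edgeSet, SimpleGraph.fromRel_adj]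
    rintro ⟨-, h | h⟩ <;> omega
  -- evaluation of edge factors
  have hEF : ∀ (P : (Fin p → X) → ℝ) (x : Fin p → X) (a b : Fin p),
      edgeFactor P x s(a, b) = marg2 P a b (x a, x b) / (marg1 P a (x a) * marg1 P b (x b)) := by
    intro P x a b; rfl
  have hEFeq : ∀ (x : Fin p → X) (a b : Fin p), (a : ℕ) + 1 = (b : ℕ) → a ≠ i →
      edgeFactor Pi x s(a, b) = edgeFactor P0 x s(a, b) := by
    intro x a b hab ha
    rw [hEF, hEF, marg2_symm Pi a b, marg2_symm P0 a b, hmatch a b hab ha,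
        hunifi, hunifi, hunif0, hunif0]
  -- equality of factors on common edges
  have hcommon : ∀ (x : Fin p → X) (e : Sym2 (Fin p)), e ≠ s(im, ip) → e ≠ s(i, ip) →
      (if e ∈ (swapGraph p im i ip).edgeSet then edgeFactor Pi x e else 1)
        = (if e ∈ (chainGraph p).edgeSet then edgeFactor P0 x e else 1) := by
    intro x e
    induction e using Sym2.ind with
    | _ a b =>
      intro hne1 hne2
      by_cases hcadj : s(a, b) ∈ (chainGraph p).edgeSet
      · rw [if_pos hcadj]
        have hadj := hcadj
        simp only [chainGraph, SimpleGraph.mem_edgeSet, SimpleGraph.fromRel_adj] at hadj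
        obtain ⟨hab, h | h⟩ := hadj
        · have hai : a ≠ i := by
            rintro rfl
            have hb : b = ip := Fin.val_injective (by omega)
            exact hne2 (by rw [hb])
          rw [if_pos, hEFeq x a b h hai]
          simp only [swapGraph, SimpleGraph.mem_edgeSet, SimpleGraph.fromRel_adj]
          exact ⟨hab, Or.inl (Or.inl ⟨h, hai⟩)⟩
        · have hbi : b ≠ i := by
            rintro rfl
            have ha : a = ip := Fin.val_injective (by omega)
            exact hne2 (by rw [ha, Sym2.eq_swap])
          rw [Sym2.eq_swap (a := a) (b := b)]
          rw [if_pos, hEFeq x b a h hbi]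
          simp only [swapGraph, SimpleGraph.mem_edgeSet, SimpleGraph.fromRel_adj]
          exact ⟨Ne.symm hab, Or.inl (Or.inl ⟨h, hbi⟩)⟩
      · rw [if_neg hcadj, if_neg]
        intro hs
        simp only [swapGraph, SimpleGraph.mem_edgeSet, SimpleGraph.fromRel_adj] at hs
        simp only [chainGraph, SimpleGraph.mem_edgeSet, SimpleGraph.fromRel_adj] at hcadj
        obtain ⟨hab, (⟨h, -⟩ | ⟨h1, h2⟩) | (⟨h, -⟩ | ⟨h1, h2⟩)⟩ := hs
        · exact hcadj ⟨hab, Or.inl h⟩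
        · exact hne1 (by rw [h1, h2])
        · exact hcadj ⟨hab, Or.inr h⟩
        · exact hne1 (by rw [h1, h2, Sym2.eq_swap])
  -- splitting the product over all edges
  have hsplit : ∀ f : Sym2 (Fin p) → ℝ,
      ∏ e : Sym2 (Fin p), f e =
        (∏ e ∈ (Finset.univ.erase s(im, ip)).erase s(i, ip), f e) * f s(i, ip) * f s(im, ip) := by
    intro f
    rw [← Finset.prod_erase_mul Finset.univ f (Finset.mem_univ s(im, ip)),
        ← Finset.prod_erase_mul _ f (Finset.mem_erase.mpr ⟨Ne.symm he12, Finset.mem_univ _⟩)]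
  -- the cardinality constant
  have hc0 : (0 : ℝ) < (Fintype.card X : ℝ) := by
    exact_mod_cast Fintype.card_pos
  -- the key pointwise identity
  have hkey : ∀ x : Fin p → X,
      Pi x * marg2 P0 ip i (x ip, x i) = P0 x * marg2 Pi ip im (x ip, x im) := by
    intro x
    have hPix := hMi x
    have hP0x := hM0 x
    rw [hsplit] at hPix hP0x
    rw [if_neg he2notswap, if_pos he1mem] at hPix
    rw [if_pos he2mem, if_neg he1notchain] at hP0x
    have hR : ∀ e ∈ (Finset.univ.erase s(im, ip)).erase s(i, ip),
        (if e ∈ (swapGraph p im i ip).edgeSet then edgeFactor Pi x e else 1)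
          = (if e ∈ (chainGraph p).edgeSet then edgeFactor P0 x e else 1) := by
      intro e he
      obtain ⟨h2, h1mem⟩ := Finset.mem_erase.mp he
      obtain ⟨h1, -⟩ := Finset.mem_erase.mp h1mem
      exact hcommon x e h1 h2
    rw [Finset.prod_congr rfl hR] at hPix
    have hmargprod : (∏ k, marg1 Pi k (x k)) = ∏ k, marg1 P0 k (x k) :=
      Finset.prod_congr rfl fun k _ => by rw [hunifi, hunif0]
    have hEFi : edgeFactor Pi x s(im, ip)
        = marg2 Pi ip im (x ip, x im) * ((Fintype.card X : ℝ) * (Fintype.card X : ℝ)) := by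
      rw [hEF, marg2_symm Pi im ip, hunifi, hunifi]
      field_simp
    have hEF0x : edgeFactor P0 x s(i, ip)
        = marg2 P0 ip i (x ip, x i) * ((Fintype.card X : ℝ) * (Fintype.card X : ℝ)) := by
      rw [hEF, marg2_symm P0 i ip, hunif0, hunif0]
      field_simp
    have hcc : ((Fintype.card X : ℝ) * (Fintype.card X : ℝ)) ≠ 0 := by positivity
    apply mul_right_cancel₀ hcc
    rw [hPix, hP0x, hmargprod, hEFi, hEF0x]
    ring
  -- positivity of the relevant marginals
  have hmApos : ∀ ab, 0 < marg2 Pi ip im ab := marg2_pos_s12 Pi hposi (Ne.symm himip)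
  have hmBpos : ∀ ab, 0 < marg2 Pi ip i ab := marg2_pos_s12 Pi hposi (Ne.symm hiip)
  have hm0pos : ∀ ab, 0 < marg2 P0 ip i ab := marg2_pos_s12 P0 hpos0 (Ne.symm hiip)
  -- the ratio identity
  have hdiv : ∀ x : Fin p → X,
      Pi x / P0 x = marg2 Pi ip im (x ip, x im) / marg2 P0 ip i (x ip, x i) := fun x =>
    (div_eq_div_iff (hpos0 x).ne' (hm0pos _).ne').mpr (by rw [hkey x]; ring)
  -- compute klDivF Pi P0
  have hkl1 : klDivF Pi P0
      = (∑ ab : X × X, marg2 Pi ip im ab * Real.logb 2 (marg2 Pi ip im ab))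
        - ∑ ab : X × X, marg2 Pi ip i ab * Real.logb 2 (marg2 P0 ip i ab) := by
    rw [klDivF, tsum_fintype]
    have hterm : ∀ x : Fin p → X, Pi x * Real.logb 2 (Pi x / P0 x)
        = Pi x * Real.logb 2 (marg2 Pi ip im (x ip, x im))
          - Pi x * Real.logb 2 (marg2 P0 ip i (x ip, x i)) := by
      intro x
      rw [hdiv x, Real.logb_div (hmApos _).ne' (hm0pos _).ne', mul_sub]
    rw [Finset.sum_congr rfl fun x _ => hterm x, Finset.sum_sub_distrib,
        ← sum_marg2_mul Pi ip im (fun ab => Real.logb 2 (marg2 Pi ip im ab)),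
        ← sum_marg2_mul Pi ip i (fun ab => Real.logb 2 (marg2 P0 ip i ab))]
  -- compute the pairwise KL divergence
  have hkl2 : klDivF (marg2 Pi ip i) (marg2 P0 ip i)
      = (∑ ab : X × X, marg2 Pi ip i ab * Real.logb 2 (marg2 Pi ip i ab))
        - ∑ ab : X × X, marg2 Pi ip i ab * Real.logb 2 (marg2 P0 ip i ab) := by
    rw [klDivF, tsum_fintype, ← Finset.sum_sub_distrib]
    refine Finset.sum_congr rfl fun ab _ => ?_
    rw [Real.logb_div (hmBpos _).ne' (hm0pos _).ne', mul_sub]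
  -- entropies as finite sums
  have hentA : ent (marg2 Pi ip im)
      = -∑ ab : X × X, marg2 Pi ip im ab * Real.logb 2 (marg2 Pi ip im ab) := by
    rw [ent, tsum_fintype]
  have hentB : ent (marg2 Pi ip i)
      = -∑ ab : X × X, marg2 Pi ip i ab * Real.logb 2 (marg2 Pi ip i ab) := by
    rw [ent, tsum_fintype]
  have hent1 : ent (marg1 Pi im) = ent (marg1 Pi i) := by
    have hfun : marg1 Pi im = marg1 Pi i := funext fun a => by rw [hunifi, hunifi]
    rw [hfun]
  rw [hkl1, hkl2, mi, mi, hent1, hentA, hentB]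
  ring


end TreePaper
end
end

section
/- (Small-noise expansion of the mutual information gap for the M-ary symmetric channel.) Let X = (X_1, …, X_p) have a tree-structured distribution with uniform node marginals on [M], let ((w, w̄), u, ū) ∈ EV², and let Y_w, Y_w̄, Y_u, Y_ū be the outputs of the M-ary symmetric channel with crossover probability q applied independently to X_w, X_w̄, X_u, X_ū. Set ε = (1 − (1−q)²)/M². Then, as q → 0, I(Y_w; Y_w̄) − I(Y_u; Y_ū) = (1−q)² [ I(X_w; X_w̄) − I(X_u; X_ū) ] − (1 − (1−q)²) [ D_KL(U ‖ p(x_w, x_w̄)) − D_KL(U ‖ p(x_u, x_ū)) ] + O(ε²), where U is the uniform distribution on [M]² and p(x_w, x_w̄), p(x_u, x_ū) denote the joint pairwise distributions of the respective input pairs; i.e., the remainder term is bounded in absolute value by K ε² for some constant K depending only on M and the input distribution, for all sufficiently small q. -/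
set_option linter.unusedSectionVars false

open scoped Classical

noncomputable section

namespace TreePaper

variable {V : Type*} [Fintype V] [DecidableEq V] {A : Type*}

/-- Shannon entropy (base 2) of a pmf on a finite alphabet. -/
def entF {α : Type*} [Fintype α] (f : α → ℝ) : ℝ :=
  -∑ a, f a * Real.logb 2 (f a)

/-- Mutual information (base 2) of a pair with joint pmf `f` on a finite alphabet:
`I(X; Y) = H(X) + H(Y) − H(X, Y)`. -/
def miF {α β : Type*} [Fintype α] [Fintype β] (f : α × β → ℝ) : ℝ :=
  entF (fun a => ∑ b, f (a, b)) + entF (fun b => ∑ a, f (a, b)) - entF f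

/-- Joint pmf of a pair of outputs of the `M`-ary symmetric channel with
crossover probability `q`, given the joint input pmf `f`:
`p_†(y) = (1−q)² f(y) + (1 − (1−q)²)/M²`. -/
def symOut (M : ℕ) (q : ℝ) (f : Fin M × Fin M → ℝ) : Fin M × Fin M → ℝ :=
  fun y => (1 - q) ^ 2 * f y + (1 - (1 - q) ^ 2) / (M : ℝ) ^ 2

/-- KL divergence (base 2) from the pmf `f` on `[M]²` to the uniform distribution
`U` on `[M]²`:  `D_KL(U ‖ f)`. -/
def klFromUnif (M : ℕ) (f : Fin M × Fin M → ℝ) : ℝ :=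
  ∑ a : Fin M × Fin M, ((M : ℝ) ^ 2)⁻¹ * Real.logb 2 (((M : ℝ) ^ 2)⁻¹ / f a)

/-! Both input pairs have uniform marginals, and the channel preserves them, so for inputs and
outputs alike `I = 2 log M − H` and only the joint entropies matter. The output law is the
mixture `(1 − s) p + s U` with `s = 1 − (1 − q)²`, a perturbation `d = s (U − p)` of total mass
zero. From `1 − 1/x ≤ log x ≤ x − 1`, `|H(p + d) − H(p) + ∑ d log p| ≤ ∑ d² / p`; the linear term
equals `−s H(p) + s (D(U ‖ p) + log M²)` and the remainder is at most `s² χ²(U ‖ p) = M⁴ χ²(U ‖ p) ε²`.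
The constants `log M²` cancel in the gap. -/

lemma abs_mul_log_add_sub_le {c d : ℝ} (hc : 0 < c) (hcd : 0 < c + d) :
    |(c + d) * Real.log (c + d) - c * Real.log c - d * (Real.log c + 1)| ≤ d ^ 2 / c := by
  have hratio : 0 < (c + d) / c := div_pos hcd hc
  have hup : Real.log ((c + d) / c) ≤ d / c :=
    (Real.log_le_sub_one_of_pos hratio).trans_eq (by field_simp; ring)
  have hlow : d / (c + d) ≤ Real.log ((c + d) / c) :=
    le_of_eq_of_le (by field_simp; ring) (Real.one_sub_inv_le_log_of_pos hratio)
  have hexpr : (c + d) * Real.log (c + d) - c * Real.log c - d * (Real.log c + 1)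
      = (c + d) * Real.log ((c + d) / c) - d := by
    rw [Real.log_div hcd.ne' hc.ne']; ring
  rw [hexpr, abs_of_nonneg]
  · have := mul_le_mul_of_nonneg_left hup hcd.le
    have hd : (c + d) * (d / c) - d = d ^ 2 / c := by field_simp; ring
    linarith
  · have := mul_le_mul_of_nonneg_left hlow hcd.le
    rw [mul_div_cancel₀ _ hcd.ne'] at this
    linarith

lemma abs_entF_add_sub_le {α : Type*} [Fintype α] {f d : α → ℝ} (hf : ∀ a, 0 < f a)
    (hfd : ∀ a, 0 < f a + d a) (hd : ∑ a, d a = 0) :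
    |entF (f + d) - entF f + ∑ a, d a * Real.logb 2 (f a)|
      ≤ (∑ a, d a ^ 2 / f a) / Real.log 2 := by
  have hlog2 : 0 < Real.log 2 := Real.log_pos one_lt_two
  have hlin : ∑ a, d a * (Real.log (f a) + 1) = ∑ a, d a * Real.log (f a) := by
    simp only [mul_add, mul_one, Finset.sum_add_distrib, hd, add_zero]
  have hexpr : entF (f + d) - entF f + ∑ a, d a * Real.logb 2 (f a)
      = -(∑ a, ((f a + d a) * Real.log (f a + d a) - f a * Real.log (f a)
          - d a * (Real.log (f a) + 1))) / Real.log 2 := by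
    simp only [entF, Pi.add_apply, Real.logb, Finset.sum_sub_distrib, hlin, mul_div_assoc',
      ← Finset.sum_div]
    ring
  rw [hexpr, abs_div, abs_neg, abs_of_pos hlog2]
  gcongr
  exact (Finset.abs_sum_le_sum_abs _ _).trans
    (Finset.sum_le_sum fun a _ => abs_mul_log_add_sub_le (hf a) (hfd a))

def chiSqFromUnif {α : Type*} [Fintype α] (f : α → ℝ) : ℝ :=
  ∑ a, ((Fintype.card α : ℝ)⁻¹ - f a) ^ 2 / f a

lemma chiSqFromUnif_nonneg {α : Type*} [Fintype α] {f : α → ℝ} (hf : ∀ a, 0 ≤ f a) :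
    0 ≤ chiSqFromUnif f :=
  Finset.sum_nonneg fun a _ => div_nonneg (sq_nonneg _) (hf a)

lemma abs_entF_mix_unif_sub_le {α : Type*} [Fintype α] {f : α → ℝ} (hf : ∀ a, 0 < f a)
    (hsum : ∑ a, f a = 1) {s : ℝ} (hs0 : 0 ≤ s) (hs1 : s ≤ 1) :
    |entF (fun a => (1 - s) * f a + s / Fintype.card α)
        - ((1 - s) * entF f - s * (∑ a, Real.logb 2 (f a)) / Fintype.card α)|
      ≤ s ^ 2 * chiSqFromUnif f / Real.log 2 := by
  set n : ℝ := (Fintype.card α : ℝ)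
  have hn : 0 < n := by
    have : (Finset.univ : Finset α).Nonempty :=
      Finset.nonempty_of_sum_ne_zero (by rw [hsum]; exact one_ne_zero)
    exact Nat.cast_pos.mpr (Finset.card_pos.mpr this)
  set d : α → ℝ := fun a => s * (n⁻¹ - f a)
  have hmix : (fun a => (1 - s) * f a + s / n) = f + d := by
    funext a; simp only [d, Pi.add_apply]; ring
  have hpos : ∀ a, 0 < f a + d a := by
    intro a
    have : f a + d a = (1 - s) * f a + s / n := by simp only [d]; ring
    rw [this]
    rcases hs0.eq_or_lt with rfl | hs
    · simpa using hf a
    · exact add_pos_of_nonneg_of_pos (mul_nonneg (by linarith) (hf a).le) (div_pos hs hn)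
  have hd : ∑ a, d a = 0 := by
    simp only [d, ← Finset.mul_sum, Finset.sum_sub_distrib, hsum, Finset.sum_const,
      Finset.card_univ, nsmul_eq_mul]
    field_simp; ring
  have hlin : ∑ a, d a * Real.logb 2 (f a)
      = s * (∑ a, Real.logb 2 (f a)) / n + s * entF f := by
    simp only [d, entF, mul_assoc, sub_mul, Finset.sum_sub_distrib, ← Finset.mul_sum]
    field_simp; ring
  have hchi : ∑ a, d a ^ 2 / f a = s ^ 2 * chiSqFromUnif f := by
    simp only [d, chiSqFromUnif, Finset.mul_sum]
    exact Finset.sum_congr rfl fun a _ => by ring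
  have key := abs_entF_add_sub_le hf hpos hd
  rw [hlin, hchi, ← hmix] at key
  convert key using 2
  ring

def HasUniformMarginals {α β : Type*} [Fintype α] [Fintype β] (f : α × β → ℝ) : Prop :=
  (∀ a, ∑ b, f (a, b) = (Fintype.card α : ℝ)⁻¹) ∧ (∀ b, ∑ a, f (a, b) = (Fintype.card β : ℝ)⁻¹)

lemma entF_const_inv_card (α : Type*) [Fintype α] :
    entF (fun _ : α => (Fintype.card α : ℝ)⁻¹) = Real.logb 2 (Fintype.card α) := by
  rcases eq_or_ne (Fintype.card α : ℝ) 0 with h | h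
  · simp [entF, h]
  · simp only [entF, Finset.sum_const, Finset.card_univ, nsmul_eq_mul, Real.logb_inv]
    field_simp

namespace HasUniformMarginals

variable {α β : Type*} [Fintype α] [Fintype β] {f : α × β → ℝ}

lemma miF_eq (hf : HasUniformMarginals f) :
    miF f = Real.logb 2 (Fintype.card α) + Real.logb 2 (Fintype.card β) - entF f := by
  rw [miF, funext hf.1, funext hf.2, entF_const_inv_card, entF_const_inv_card]

lemma sum_eq_one [Nonempty α] (hf : HasUniformMarginals f) : ∑ ab, f ab = 1 := by
  rw [Fintype.sum_prod_type, Finset.sum_congr rfl fun a _ => hf.1 a, Finset.sum_const,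
    Finset.card_univ, nsmul_eq_mul, mul_inv_cancel₀ (Nat.cast_ne_zero.mpr Fintype.card_ne_zero)]

lemma symOut {M : ℕ} (hM : M ≠ 0) {F : Fin M × Fin M → ℝ} (hF : HasUniformMarginals F) (q : ℝ) :
    HasUniformMarginals (symOut M q F) := by
  have hM' : (M : ℝ) ≠ 0 := Nat.cast_ne_zero.mpr hM
  constructor <;> intro a <;>
    simp only [TreePaper.symOut, Finset.sum_add_distrib, ← Finset.mul_sum, hF.1, hF.2,
      Finset.sum_const, Finset.card_univ, Fintype.card_fin, nsmul_eq_mul] <;>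
    field_simp <;> ring

end HasUniformMarginals

lemma klFromUnif_eq {M : ℕ} {F : Fin M × Fin M → ℝ} (hF : ∀ a, 0 < F a) :
    klFromUnif M F = -Real.logb 2 ((M : ℝ) ^ 2) - (∑ a, Real.logb 2 (F a)) / (M : ℝ) ^ 2 := by
  rcases Nat.eq_zero_or_pos M with rfl | hM
  · simp [klFromUnif]
  have hN : ((M : ℝ) ^ 2)⁻¹ ≠ 0 := by positivity
  have hcard : (Fintype.card (Fin M × Fin M) : ℝ) = (M : ℝ) ^ 2 := by simp; ring
  simp only [klFromUnif, Real.logb_div hN (hF _).ne', Real.logb_inv, mul_sub,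
    Finset.sum_sub_distrib, Finset.sum_const, Finset.card_univ, hcard, nsmul_eq_mul,
    ← Finset.mul_sum]
  field_simp

lemma abs_entF_symOut_sub_le {M : ℕ} {F : Fin M × Fin M → ℝ} (hF : ∀ a, 0 < F a)
    (hsum : ∑ a, F a = 1) {q : ℝ} (hq0 : 0 ≤ q) (hq2 : q ≤ 2) :
    |entF (symOut M q F) - ((1 - q) ^ 2 * entF F
        + (1 - (1 - q) ^ 2) * (klFromUnif M F + Real.logb 2 ((M : ℝ) ^ 2)))|
      ≤ (1 - (1 - q) ^ 2) ^ 2 * chiSqFromUnif F / Real.log 2 := by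
  have hcard : (Fintype.card (Fin M × Fin M) : ℝ) = (M : ℝ) ^ 2 := by simp; ring
  have key := abs_entF_mix_unif_sub_le hF hsum (s := 1 - (1 - q) ^ 2) (by nlinarith) (by nlinarith)
  rw [hcard, sub_sub_cancel] at key
  rw [klFromUnif_eq hF]
  convert key using 3
  · rfl
  · ring

lemma abs_miF_symOut_sub_sub_le {M : ℕ} (hM : 0 < M) {F G : Fin M × Fin M → ℝ}
    (hFu : HasUniformMarginals F) (hGu : HasUniformMarginals G)
    (hF : ∀ a, 0 < F a) (hG : ∀ a, 0 < G a) {q : ℝ} (hq0 : 0 ≤ q) (hq2 : q ≤ 2) :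
    |miF (symOut M q F) - miF (symOut M q G)
        - ((1 - q) ^ 2 * (miF F - miF G)
          - (1 - (1 - q) ^ 2) * (klFromUnif M F - klFromUnif M G))|
      ≤ (1 - (1 - q) ^ 2) ^ 2 * (chiSqFromUnif F + chiSqFromUnif G) / Real.log 2 := by
  have : Nonempty (Fin M) := ⟨⟨0, hM⟩⟩
  have hRF := abs_entF_symOut_sub_le hF hFu.sum_eq_one hq0 hq2
  have hRG := abs_entF_symOut_sub_le hG hGu.sum_eq_one hq0 hq2
  rw [(hFu.symOut hM.ne' q).miF_eq, (hGu.symOut hM.ne' q).miF_eq, hFu.miF_eq, hGu.miF_eq]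
  calc _ = |(entF (symOut M q G) - ((1 - q) ^ 2 * entF G
            + (1 - (1 - q) ^ 2) * (klFromUnif M G + Real.logb 2 ((M : ℝ) ^ 2))))
          - (entF (symOut M q F) - ((1 - q) ^ 2 * entF F
            + (1 - (1 - q) ^ 2) * (klFromUnif M F + Real.logb 2 ((M : ℝ) ^ 2))))| := by
        congr 1; ring
    _ ≤ _ := (abs_sub _ _).trans ((add_le_add hRG hRF).trans_eq (by ring))

section Marginals

variable [Fintype A]

lemma sum_marg2_right (P : (V → A) → ℝ) (i j : V) (a : A) :
    ∑ b, marg2 P i j (a, b) = marg1 P i a := by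
  simp only [marg2, marg1, tsum_fintype]
  rw [Finset.sum_comm]
  refine Finset.sum_congr rfl fun x _ => ?_
  by_cases h : x i = a <;> simp [h]

lemma sum_marg2_left (P : (V → A) → ℝ) (i j : V) (b : A) :
    ∑ a, marg2 P i j (a, b) = marg1 P j b := by
  simp only [marg2_symm P i j, sum_marg2_right]

end Marginals

lemma hasUniformMarginals_marg2 {M : ℕ} {P : (V → Fin M) → ℝ}
    (hunif : ∀ (i : V) (a : Fin M), marg1 P i a = 1 / (M : ℝ)) (i j : V) :
    HasUniformMarginals (marg2 P i j) :=
  ⟨fun a => by simp [sum_marg2_right, hunif], fun b => by simp [sum_marg2_left, hunif]⟩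

theorem small_noise_expansion_mi_gap_general
    {V : Type*} [Fintype V] [DecidableEq V] (M : ℕ) (hM : 0 < M)
    (P : (V → Fin M) → ℝ)
    (hunif : ∀ (i : V) (a : Fin M), marg1 P i a = 1 / (M : ℝ))
    (w wb u ub : V)
    (hposW : ∀ ab : Fin M × Fin M, 0 < marg2 P w wb ab)
    (hposU : ∀ ab : Fin M × Fin M, 0 < marg2 P u ub ab) :
    ∃ K : ℝ, 0 < K ∧ ∃ q0 : ℝ, 0 < q0 ∧ ∀ q : ℝ, 0 < q → q ≤ q0 →
      |miF (symOut M q (marg2 P w wb)) - miF (symOut M q (marg2 P u ub))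
          - ((1 - q) ^ 2 * (miF (marg2 P w wb) - miF (marg2 P u ub))
            - (1 - (1 - q) ^ 2) *
              (klFromUnif M (marg2 P w wb) - klFromUnif M (marg2 P u ub)))|
        ≤ K * ((1 - (1 - q) ^ 2) / (M : ℝ) ^ 2) ^ 2 := by
  set C := chiSqFromUnif (marg2 P w wb) + chiSqFromUnif (marg2 P u ub)
  have hC : 0 ≤ C := add_nonneg (chiSqFromUnif_nonneg fun a => (hposW a).le)
    (chiSqFromUnif_nonneg fun a => (hposU a).le)
  refine ⟨(M : ℝ) ^ 4 * C / Real.log 2 + 1, by positivity, 1, one_pos, fun q hq hq1 => ?_⟩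
  refine (abs_miF_symOut_sub_sub_le hM (hasUniformMarginals_marg2 hunif w wb)
    (hasUniformMarginals_marg2 hunif u ub) hposW hposU hq.le (by linarith)).trans ?_
  have hscale : (1 - (1 - q) ^ 2) ^ 2 * C / Real.log 2
      = (M : ℝ) ^ 4 * C / Real.log 2 * ((1 - (1 - q) ^ 2) / (M : ℝ) ^ 2) ^ 2 := by
    have : (M : ℝ) ≠ 0 := by positivity
    field_simp
  rw [hscale, add_mul, one_mul]
  exact le_add_of_nonneg_right (sq_nonneg _)

/-- **Small-noise expansion of the mutual information gap for the M-ary symmetric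
channel.**  For a tree-structured `X` with uniform node marginals on `[M]` and a
tuple `((w, w̄), u, ū) ∈ EV²`, with `ε = (1−(1−q)²)/M²`, as `q → 0`:
`I(Y_w; Y_w̄) − I(Y_u; Y_ū) = (1−q)²[I(X_w; X_w̄) − I(X_u; X_ū)]
  − (1−(1−q)²)[D_KL(U‖p(x_w, x_w̄)) − D_KL(U‖p(x_u, x_ū))] + O(ε²)`,
the remainder being bounded by `K ε²` for a constant `K` (depending only on `M`
and the input distribution) for all sufficiently small `q > 0`. -/
theorem small_noise_expansion_mi_gap
    {V : Type*} [Fintype V] [DecidableEq V] (M : ℕ) (hM : 0 < M)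
    (T : SimpleGraph V) (hT : T.IsTree)
    (P : (V → Fin M) → ℝ) (hP : IsProbDist P) (hMarkov : IsMarkovTree T P)
    (hunif : ∀ (i : V) (a : Fin M), marg1 P i a = 1 / (M : ℝ))
    (w wb u ub : V) (hEV : EVtuple T w wb u ub)
    (hposW : ∀ ab : Fin M × Fin M, 0 < marg2 P w wb ab)
    (hposU : ∀ ab : Fin M × Fin M, 0 < marg2 P u ub ab) :
    ∃ K : ℝ, 0 < K ∧ ∃ q0 : ℝ, 0 < q0 ∧ ∀ q : ℝ, 0 < q → q ≤ q0 →
      |miF (symOut M q (marg2 P w wb)) - miF (symOut M q (marg2 P u ub))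
          - ((1 - q) ^ 2 * (miF (marg2 P w wb) - miF (marg2 P u ub))
            - (1 - (1 - q) ^ 2) *
              (klFromUnif M (marg2 P w wb) - klFromUnif M (marg2 P u ub)))|
        ≤ K * ((1 - (1 - q) ^ 2) / (M : ℝ) ^ 2) ^ 2 :=
  small_noise_expansion_mi_gap_general M hM P hunif w wb u ub hposW hposU

end TreePaper
end
end

section
/- (Sufficient condition for a positive noisy information threshold under non-identically distributed binary symmetric noise.) Let X = (X_1, …, X_p) ∈ {−1, +1}^p have a tree-structured (Ising) distribution with respect to a tree T = (V, E), with information threshold I^o > 0 and pairwise correlations satisfying |E[X_i X_j]| ∈ (0, 1) for all (i, j) ∈ E. Let Y_i = N_i X_i, where the N_i ∈ {−1, +1} are independent of X and of each other, with P(N_i = −1) = q_i ∈ [0, 1/2) (i.e., each Y_i is the output of a binary symmetric channel with crossover probability q_i). If for all i, j ∈ V the ratio (1 − 2q_i)/(1 − 2q_j) lies in the open interval ( max_{(i,j)∈E} |E[X_i X_j]| , 1 / max_{(i,j)∈E} |E[X_i X_j]| ), then the noisy information threshold satisfies I^o_† > 0. In particular, if all q_i are equal the condition always holds. -/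
set_option linter.unusedSectionVars false

open scoped Classical

noncomputable section

namespace TreePaper

variable {V : Type*} [Fintype V] [DecidableEq V] {A : Type*}

/-- Spin value of a binary symbol: `true ↦ +1`, `false ↦ −1`. -/
def spin : Bool → ℝ := fun b => if b then 1 else -1

/-- The correlation `E[X_i X_j]` of the `±1`-valued coordinates `i` and `j`. -/
def corr (P : (V → Bool) → ℝ) (i j : V) : ℝ :=
  ∑ ab : Bool × Bool, marg2 P i j ab * spin ab.1 * spin ab.2

/-- Probability mass of the Bernoulli flip indicator with flip probability `q`. -/
def bern (q : ℝ) : Bool → ℝ := fun b => if b then q else 1 - q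

/-- The joint pmf of the noisy pair `(Y_i, Y_j) = (N_i X_i, N_j X_j)`, where
`N_i` flips the `±1`-valued `X_i` with probability `q i`, independently across
nodes and independently of `X` (a binary symmetric channel on each node;
in the `Bool` encoding, multiplication of spins is `xor` of flips). -/
def noisyPair (P : (V → Bool) → ℝ) (q : V → ℝ) (i j : V) : Bool × Bool → ℝ :=
  fun ab => ∑ x : Bool × Bool, ∑ nn : Bool × Bool,
    marg2 P i j x * bern (q i) nn.1 * bern (q j) nn.2 *
      (if (xor nn.1 x.1, xor nn.2 x.2) = ab then 1 else 0)

/-- The maximal absolute edge correlation `max_{(i,j) ∈ E} |E[X_i X_j]|`. -/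
def maxEdgeCorr (T : SimpleGraph V) (P : (V → Bool) → ℝ) : ℝ :=
  sSup {x : ℝ | ∃ a b : V, T.Adj a b ∧ x = |corr P a b|}

/-!
With uniform marginals the tree factorisation reads `P(x) = 2⁻ⁿ ∏_{ij ∈ E} (1 + ρ_ij x_i x_j)`.
Expanding the product, `E[X_a X_b]` only sees the edge sets whose odd-degree vertices are exactly
`a` and `b`; in a forest the only such set is the path from `a` to `b`, whence the correlation
decay `ρ_ab = ∏_{e on the path} ρ_e`. The channel multiplies `ρ_ij` by `c_i c_j`,
`c_i = 1 - 2 q_i`, and the mutual information of a uniform pair is increasing in `|ρ|`.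
With `m` the largest edge correlation, the ratio condition says `c_i m < c_j`. Split the path from
`u` to `ū` at the edge `{s, t} = {w, w̄}`: by decay `c_u |ρ_us| ≤ c_s`, strictly when `u ≠ s`,
and likewise `c_ū |ρ_tū| ≤ c_t`. The path has at least two edges, so one of the two is strict and
`|ρ^Y_uū| < |ρ^Y_ww̄|`.
-/

open Finset SimpleGraph
open scoped symmDiff

section Forest

variable {V : Type*} [DecidableEq V] {G : SimpleGraph V}

/-- `t` is an `{a, b}`-join: its odd-degree vertices are exactly `a` and `b` (none if `a = b`). -/
def IsJoin (t : Finset (Sym2 V)) (a b : V) : Prop :=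
  ∀ v, Even (#{e ∈ t | v ∈ e} + (if v = a then 1 else 0) + (if v = b then 1 else 0))

lemma _root_.SimpleGraph.Walk.IsTrail.isJoin_edges {a b : V} {p : G.Walk a b} (hp : p.IsTrail) :
    IsJoin p.edges.toFinset a b := by
  induction p with
  | nil => intro v; split_ifs <;> simp
  | @cons u w b h q ih =>
    rw [Walk.isTrail_cons] at hp
    intro v
    have hq := ih hp.1 v
    have hdeg : #{e ∈ (s(u, w) :: q.edges).toFinset | v ∈ e}
        = #{e ∈ q.edges.toFinset | v ∈ e} + (if v = u then 1 else 0)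
          + (if v = w then 1 else 0) := by
      rw [List.toFinset_cons, filter_insert]
      by_cases hu : v = u <;> by_cases hw : v = w
      · exact absurd (hu ▸ hw) h.ne
      all_goals simp [hu, hw, hp.2, h.ne, h.ne.symm]
    rw [Walk.edges_cons, hdeg]
    rw [Nat.even_iff] at hq ⊢
    split_ifs at hq ⊢ <;> omega

lemma _root_.SimpleGraph.Walk.exists_eq_append_cons_of_mem_edges {u v : V} {p : G.Walk u v}
    {e : Sym2 V} (he : e ∈ p.edges) :
    ∃ (s t : V) (h : G.Adj s t) (p₁ : G.Walk u s) (p₂ : G.Walk t v),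
      s(s, t) = e ∧ p = p₁.append (Walk.cons h p₂) := by
  induction p with
  | nil => simp at he
  | @cons u x v h q ih =>
    rcases List.mem_cons.1 he with rfl | he
    · exact ⟨u, x, h, Walk.nil, q, rfl, rfl⟩
    · obtain ⟨s, t, h', p₁, p₂, hst, rfl⟩ := ih he
      exact ⟨s, t, h', Walk.cons h p₁, p₂, hst, rfl⟩

lemma _root_.Finset.even_card_symmDiff_iff {α : Type*} [DecidableEq α] (X Y : Finset α) :
    Even #(X ∆ Y) ↔ (Even #X ↔ Even #Y) := by
  have hsymm : #(X ∆ Y) = #(X \ Y) + #(Y \ X) :=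
    card_union_of_disjoint disjoint_sdiff_sdiff
  have hX := card_sdiff_add_card_inter X Y
  have hY := card_sdiff_add_card_inter Y X
  rw [inter_comm] at hY
  simp only [Nat.even_iff]
  omega

lemma _root_.Finset.even_card_filter_mem_sym2 {F : Finset V} {x y : V} (hxy : x ≠ y)
    (hF : x ∈ F ↔ y ∈ F) : Even #{v ∈ F | v ∈ s(x, y)} := by
  by_cases hx : x ∈ F
  · have hfilter : {v ∈ F | v ∈ s(x, y)} = {x, y} := by
      ext v
      simp only [mem_filter, Sym2.mem_iff, mem_insert, mem_singleton]
      exact ⟨And.right, by rintro (rfl | rfl) <;> simp [hx, hF.1 hx]⟩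
    rw [hfilter, card_pair hxy]
    exact even_two
  · have hfilter : {v ∈ F | v ∈ s(x, y)} = ∅ := filter_eq_empty_iff.2 fun v hv hmem => by
      rcases Sym2.mem_iff.1 hmem with rfl | rfl
      exacts [hx hv, hx (hF.2 hv)]
    rw [hfilter, card_empty]
    exact Even.zero

lemma _root_.SimpleGraph.IsAcyclic.eq_empty_of_forall_even [Fintype V] (hG : G.IsAcyclic)
    {S : Finset (Sym2 V)} (hS : ∀ e ∈ S, e ∈ G.edgeSet) (heven : ∀ v, Even #{e ∈ S | v ∈ e}) :
    S = ∅ := by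
  by_contra hne
  obtain ⟨e, he⟩ := nonempty_iff_ne_empty.2 hne
  induction e using Sym2.ind with | _ a b => ?_
  -- double count the incidences between `S` and the side `F` of the bridge `s(a, b)` containing `a`
  set F : Finset V := {v | (G.deleteEdges {s(a, b)}).Reachable a v}
  have hbF : b ∉ F := by
    simpa [F] using isBridge_iff.1 (isAcyclic_iff_forall_adj_isBridge.1 hG (hS _ he))
  have hcut : {v ∈ F | v ∈ s(a, b)} = {a} := by
    ext v
    simp only [mem_filter, Sym2.mem_iff, mem_singleton]
    refine ⟨fun ⟨hv, h⟩ => h.resolve_right (by rintro rfl; exact hbF hv), ?_⟩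
    rintro rfl
    exact ⟨by simp [F], Or.inl rfl⟩
  have hside : ∀ f ∈ S.erase s(a, b), Even #{v ∈ F | v ∈ f} := by
    intro f hf
    induction f using Sym2.ind with | _ x y => ?_
    have hxy : (G.deleteEdges {s(a, b)}).Adj x y := by
      simpa [ne_of_mem_erase hf] using hS _ (mem_of_mem_erase hf)
    refine even_card_filter_mem_sym2 hxy.ne ?_
    simp only [F, mem_filter, mem_univ, true_and]
    exact ⟨fun h => h.trans hxy.reachable, fun h => h.trans hxy.symm.reachable⟩
  have hcount := sum_card_bipartiteAbove_eq_sum_card_bipartiteBelow (fun v (f : Sym2 V) => v ∈ f)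
    (s := F) (t := S)
  simp only [bipartiteAbove, bipartiteBelow] at hcount
  rw [← add_sum_erase _ _ he, hcut, card_singleton] at hcount
  have hodd : Odd (∑ v ∈ F, #{e ∈ S | v ∈ e}) := hcount ▸ (even_sum _ hside).one_add
  exact Nat.not_even_iff_odd.2 hodd (even_sum _ fun v _ => heven v)

lemma _root_.SimpleGraph.IsAcyclic.eq_of_isJoin [Fintype V] (hG : G.IsAcyclic)
    {t t' : Finset (Sym2 V)} {a b : V} (ht : ∀ e ∈ t, e ∈ G.edgeSet) (ht' : ∀ e ∈ t', e ∈ G.edgeSet)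
    (hjoin : IsJoin t a b) (hjoin' : IsJoin t' a b) : t = t' := by
  rw [← symmDiff_eq_empty]
  refine hG.eq_empty_of_forall_even (fun e he => ?_) fun v => ?_
  · rcases mem_symmDiff.1 he with ⟨he, -⟩ | ⟨he, -⟩
    exacts [ht e he, ht' e he]
  · rw [show {e ∈ t ∆ t' | v ∈ e} = {e ∈ t | v ∈ e} ∆ {e ∈ t' | v ∈ e} by
      ext; simp only [mem_filter, mem_symmDiff]; tauto, even_card_symmDiff_iff]
    have h := hjoin v
    have h' := hjoin' v
    simp only [Nat.even_add] at h h'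
    tauto

end Forest

/-- The mutual information `½ log₂ ((1 - ρ)^(1 - ρ) (1 + ρ)^(1 + ρ))` of two uniform `±1` spins
with correlation `ρ`, written as `1 - h₂((1 + ρ) / 2)` with `h₂` the binary entropy in bits. -/
def miOfCorr (ρ : ℝ) : ℝ := 1 - Real.binEntropy ((1 + ρ) / 2) / Real.log 2

lemma miOfCorr_abs (ρ : ℝ) : miOfCorr |ρ| = miOfCorr ρ := by
  rcases abs_choice ρ with h | h <;> rw [h]
  rw [miOfCorr, miOfCorr, show (1 + -ρ) / 2 = 1 - (1 + ρ) / 2 by ring, Real.binEntropy_one_sub]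

lemma miOfCorr_lt_of_abs_lt {x y : ℝ} (hxy : |x| < |y|) (hy : |y| ≤ 1) :
    miOfCorr x < miOfCorr y := by
  rw [← miOfCorr_abs x, ← miOfCorr_abs y, miOfCorr, miOfCorr]
  have hx := abs_nonneg x
  have hent : Real.binEntropy ((1 + |y|) / 2) < Real.binEntropy ((1 + |x|) / 2) :=
    Real.binEntropy_strictAntiOn ⟨by linarith, by linarith⟩ ⟨by linarith, by linarith⟩
      (by linarith)
  have := Real.log_pos one_lt_two
  gcongr

/-- The joint law of two uniform `±1` spins with correlation `ρ`. -/
def symmPair (ρ : ℝ) : Bool × Bool → ℝ := fun ab => (1 + spin ab.1 * spin ab.2 * ρ) / 4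

lemma entF_eq_sum_negMulLog {α : Type*} [Fintype α] (f : α → ℝ) :
    entF f = (∑ a, Real.negMulLog (f a)) / Real.log 2 := by
  simp only [entF, Real.logb, Real.negMulLog, sum_div, ← sum_neg_distrib]
  congr 1 with a
  ring

lemma negMulLog_div_two (x : ℝ) :
    Real.negMulLog (x / 2) = (Real.negMulLog x + x * Real.log 2) / 2 := by
  rw [div_eq_mul_inv, Real.negMulLog_mul]
  simp only [Real.negMulLog, Real.log_inv]
  ring

lemma miF_symmPair (ρ : ℝ) : miF (symmPair ρ) = miOfCorr ρ := by
  have hmarg : ∀ g : Bool → ℝ, (∀ a, g a = 1 / 2) → entF g = 1 := by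
    intro g hg
    rw [entF_eq_sum_negMulLog, Fintype.sum_bool, hg, hg]
    simp only [Real.negMulLog, one_div, Real.log_inv]
    field_simp
    ring
  have hjoint : ∑ ab, Real.negMulLog (symmPair ρ ab)
      = 2 * Real.negMulLog ((1 + ρ) / 2 / 2) + 2 * Real.negMulLog ((1 - (1 + ρ) / 2) / 2) := by
    simp [Fintype.sum_prod_type, symmPair, spin]
    ring_nf
  rw [miF, hmarg _ fun a => by cases a <;> simp [symmPair, spin] <;> ring,
    hmarg _ fun b => by cases b <;> simp [symmPair, spin] <;> ring,
    entF_eq_sum_negMulLog, hjoint, negMulLog_div_two ((1 + ρ) / 2),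
    negMulLog_div_two (1 - (1 + ρ) / 2), miOfCorr,
    Real.binEntropy_eq_negMulLog_add_negMulLog_one_sub]
  field_simp
  ring

section Correlation

variable {V : Type*}

def edgeSpin (x : V → Bool) : Sym2 V → ℝ :=
  Sym2.lift ⟨fun i j => spin (x i) * spin (x j), fun _ _ => mul_comm _ _⟩

@[simp] lemma edgeSpin_mk (x : V → Bool) (i j : V) :
    edgeSpin x s(i, j) = spin (x i) * spin (x j) := rfl

variable [Fintype V] [DecidableEq V] {P : (V → Bool) → ℝ}

lemma corr_comm (P : (V → Bool) → ℝ) (i j : V) : corr P i j = corr P j i := by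
  rw [corr, corr, ← (Equiv.prodComm Bool Bool).sum_comp]
  refine sum_congr rfl fun ⟨a, b⟩ _ => ?_
  rw [Equiv.prodComm_apply, Prod.swap_prod_mk, marg2_symm P i j b a]
  ring

def edgeCorr (P : (V → Bool) → ℝ) : Sym2 V → ℝ := Sym2.lift ⟨corr P, corr_comm P⟩

@[simp] lemma edgeCorr_mk (P : (V → Bool) → ℝ) (i j : V) : edgeCorr P s(i, j) = corr P i j := rfl

lemma corr_eq_sum (P : (V → Bool) → ℝ) (i j : V) :
    corr P i j = ∑ x : V → Bool, P x * (spin (x i) * spin (x j)) := by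
  simp only [corr, marg2, tsum_fintype, sum_mul]
  rw [sum_comm]
  refine sum_congr rfl fun x _ => ?_
  simp only [Fintype.sum_prod_type, Fintype.sum_bool]
  cases x i <;> cases x j <;> simp [spin]

lemma marg2_add_marg2 (P : (V → Bool) → ℝ) (i j : V) (a : Bool) :
    marg2 P i j (a, true) + marg2 P i j (a, false) = marg1 P i a := by
  simp only [marg2, marg1, tsum_fintype, ← sum_add_distrib]
  refine sum_congr rfl fun x _ => ?_
  by_cases h : x i = a <;> cases x j <;> simp [h]

lemma marg2_eq_symmPair (hunif : ∀ i a, marg1 P i a = 1 / 2) (i j : V) :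
    marg2 P i j = symmPair (corr P i j) := by
  have hi := fun a => (marg2_add_marg2 P i j a).trans (hunif i a)
  have hj := fun b => (marg2_add_marg2 P j i b).trans (hunif j b)
  simp only [← marg2_symm P i j] at hj
  have hcorr : corr P i j = marg2 P i j (true, true) - marg2 P i j (true, false)
      - marg2 P i j (false, true) + marg2 P i j (false, false) := by
    simp [corr, Fintype.sum_prod_type, spin]
    ring
  funext ⟨a, b⟩
  cases a <;> cases b <;> simp only [symmPair, spin] <;> norm_num <;>
    linarith [hi true, hi false, hj true]

lemma noisyPair_eq_symmPair (hunif : ∀ i a, marg1 P i a = 1 / 2) (q : V → ℝ) (i j : V) :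
    noisyPair P q i j = symmPair ((1 - 2 * q i) * (1 - 2 * q j) * corr P i j) := by
  funext ⟨a, b⟩
  simp only [noisyPair, marg2_eq_symmPair hunif, Fintype.sum_prod_type, Fintype.sum_bool]
  cases a <;> cases b <;> simp [symmPair, bern, spin] <;> ring

lemma miF_noisyPair (hunif : ∀ i a, marg1 P i a = 1 / 2) (q : V → ℝ) (i j : V) :
    miF (noisyPair P q i j) = miOfCorr ((1 - 2 * q i) * (1 - 2 * q j) * corr P i j) := by
  rw [noisyPair_eq_symmPair hunif, miF_symmPair]

lemma sum_prod_spin_pow (D : V → ℕ) :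
    ∑ x : V → Bool, ∏ v, spin (x v) ^ D v = if ∀ v, Even (D v) then 2 ^ Fintype.card V else 0 := by
  rw [← Fintype.prod_sum (fun v b => spin b ^ D v)]
  have hsum : ∀ v, ∑ b, spin b ^ D v = if Even (D v) then 2 else 0 := fun v => by
    simp only [Fintype.sum_bool, spin, if_true, Bool.false_eq_true, if_false, one_pow,
      neg_one_pow_eq_ite]
    split_ifs <;> norm_num
  simp_rw [hsum, Fintype.prod_ite_zero, prod_const, card_univ]

lemma edgeSpin_eq_prod (x : V → Bool) {e : Sym2 V} (he : ¬e.IsDiag) :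
    edgeSpin x e = ∏ v, spin (x v) ^ (if v ∈ e then 1 else 0) := by
  induction e using Sym2.ind with | _ i j => ?_
  have hij : i ≠ j := by simpa using he
  have hind : ∀ v, (if v ∈ s(i, j) then 1 else 0)
      = (if v = i then 1 else 0) + (if v = j then 1 else 0) := fun v => by
    by_cases hi : v = i <;> by_cases hj : v = j <;> simp_all
  simp_rw [hind, pow_add, prod_mul_distrib]
  simp

lemma sum_prod_edgeSpin_mul {t : Finset (Sym2 V)} (ht : ∀ e ∈ t, ¬e.IsDiag) (a b : V) :
    ∑ x : V → Bool, (∏ e ∈ t, edgeSpin x e) * (spin (x a) * spin (x b))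
      = if IsJoin t a b then 2 ^ Fintype.card V else 0 := by
  have hmono : ∀ x : V → Bool, (∏ e ∈ t, edgeSpin x e) * (spin (x a) * spin (x b))
      = ∏ v, spin (x v) ^ (#{e ∈ t | v ∈ e} + (if v = a then 1 else 0)
        + (if v = b then 1 else 0)) := fun x => by
    rw [prod_congr rfl fun e he => edgeSpin_eq_prod x (ht e he), prod_comm]
    simp_rw [prod_pow_eq_pow_sum, ← card_filter, pow_add, prod_mul_distrib]
    simp [mul_assoc]
  simp_rw [hmono, sum_prod_spin_pow]
  exact if_congr Iff.rfl rfl rfl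

variable {T : SimpleGraph V}

lemma IsMarkovTree.eq_prod (hMarkov : IsMarkovTree T P) (hunif : ∀ i a, marg1 P i a = 1 / 2)
    (x : V → Bool) :
    P x = (1 / 2) ^ Fintype.card V * ∏ e ∈ T.edgeFinset, (1 + edgeSpin x e * edgeCorr P e) := by
  rw [hMarkov x]
  congr 1
  · simp [hunif]
  · rw [← prod_filter]
    refine prod_congr (by ext; simp) fun e _ => ?_
    induction e using Sym2.ind with | _ i j => ?_
    simp only [edgeFactor, Sym2.lift_mk, marg2_eq_symmPair hunif, hunif, symmPair, edgeSpin_mk,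
      edgeCorr_mk]
    ring

theorem corr_eq_prod_edgeCorr (hT : T.IsAcyclic) (hMarkov : IsMarkovTree T P)
    (hunif : ∀ i a, marg1 P i a = 1 / 2) {a b : V} {p : T.Walk a b} (hp : p.IsPath) :
    corr P a b = (p.edges.map (edgeCorr P)).prod := by
  have hE : ∀ t ∈ T.edgeFinset.powerset, ∀ e ∈ t, e ∈ T.edgeSet := fun t ht e he =>
    mem_edgeFinset.1 (mem_powerset.1 ht he)
  have hpath : p.edges.toFinset ∈ T.edgeFinset.powerset := mem_powerset.2 fun e he =>
    mem_edgeFinset.2 (p.edges_subset_edgeSet (List.mem_toFinset.1 he))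
  have hjoin := hp.isTrail.isJoin_edges
  have hexpand : ∀ x : V → Bool, P x * (spin (x a) * spin (x b)) = (1 / 2) ^ Fintype.card V *
      ∑ t ∈ T.edgeFinset.powerset,
        (∏ e ∈ t, edgeCorr P e) * ((∏ e ∈ t, edgeSpin x e) * (spin (x a) * spin (x b))) := by
    intro x
    rw [hMarkov.eq_prod hunif, prod_one_add, mul_assoc, sum_mul]
    congr 1
    refine sum_congr rfl fun t _ => ?_
    rw [prod_mul_distrib]
    ring
  rw [corr_eq_sum, sum_congr rfl fun x _ => hexpand x, ← mul_sum, sum_comm]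
  simp_rw [← mul_sum]
  -- every other set of edges fails to be an `{a, b}`-join, so only the path survives
  rw [sum_eq_single_of_mem _ hpath, sum_prod_edgeSpin_mul, if_pos hjoin,
    List.prod_toFinset _ hp.edges_nodup]
  · rw [mul_left_comm, ← mul_pow]
    norm_num
  · exact fun e he => T.not_isDiag_of_mem_edgeSet (hE _ hpath e he)
  · intro t ht hne
    rw [sum_prod_edgeSpin_mul fun e he => T.not_isDiag_of_mem_edgeSet (hE t ht e he),
      if_neg fun h => hne (hT.eq_of_isJoin (hE t ht) (hE _ hpath) h hjoin), mul_zero]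

lemma abs_corr_le_pow_length (hT : T.IsAcyclic) (hMarkov : IsMarkovTree T P)
    (hunif : ∀ i a, marg1 P i a = 1 / 2) {m : ℝ} (hm : ∀ i j, T.Adj i j → |corr P i j| ≤ m)
    {a b : V} {p : T.Walk a b} (hp : p.IsPath) : |corr P a b| ≤ m ^ p.length := by
  rw [corr_eq_prod_edgeCorr hT hMarkov hunif hp, ← List.prod_toFinset _ hp.edges_nodup, abs_prod,
    ← p.length_edges, ← List.toFinset_card_of_nodup hp.edges_nodup, ← prod_const]
  refine prod_le_prod (fun _ _ => abs_nonneg _) fun e he => ?_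
  have he : e ∈ T.edgeSet := p.edges_subset_edgeSet (List.mem_toFinset.1 he)
  induction e using Sym2.ind with | _ i j => exact hm i j he

lemma mul_abs_corr_le (hT : T.IsAcyclic) (hMarkov : IsMarkovTree T P)
    (hunif : ∀ i a, marg1 P i a = 1 / 2) {c : V → ℝ} {m : ℝ} (hc : ∀ i, 0 ≤ c i) (hm0 : 0 ≤ m)
    (hm1 : m ≤ 1) (hm : ∀ i j, T.Adj i j → |corr P i j| ≤ m) (hcm : ∀ i j, c i * m < c j)
    {a b : V} {p : T.Walk a b} (hp : p.IsPath) :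
    c a * |corr P a b| ≤ c b ∧ (¬p.Nil → c a * |corr P a b| < c b) := by
  have hpow := abs_corr_le_pow_length hT hMarkov hunif hm hp
  have hlt : ¬p.Nil → c a * |corr P a b| < c b := fun hnil => by
    have hle : |corr P a b| ≤ m :=
      hpow.trans (pow_le_of_le_one hm0 hm1 (Walk.length_eq_zero_iff.not.2 hnil))
    exact (mul_le_mul_of_nonneg_left hle (hc a)).trans_lt (hcm a b)
  refine ⟨?_, hlt⟩
  by_cases hnil : p.Nil
  · obtain rfl := hnil.eq
    rw [Walk.length_eq_zero_iff.2 hnil, pow_zero] at hpow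
    exact mul_le_of_le_one_right (hc a) hpow
  · exact (hlt hnil).le

lemma abs_mul_corr_lt_of_evTuple (hT : T.IsAcyclic) (hMarkov : IsMarkovTree T P)
    (hunif : ∀ i a, marg1 P i a = 1 / 2) {c : V → ℝ} {m : ℝ} (hc : ∀ i, 0 < c i) (hm0 : 0 ≤ m)
    (hm1 : m ≤ 1) (hm : ∀ i j, T.Adj i j → |corr P i j| ≤ m) (hcm : ∀ i j, c i * m < c j)
    (hpos : ∀ i j, T.Adj i j → 0 < |corr P i j|) {w w' u v : V} (h : EVtuple T w w' u v) :
    |c u * c v * corr P u v| < |c w * c w' * corr P w w'| := by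
  obtain ⟨-, p, hp, he, hlen⟩ := h
  obtain ⟨s, t, hst, p₁, p₂, hse, rfl⟩ := Walk.exists_eq_append_cons_of_mem_edges he
  have hp₁ : p₁.IsPath := hp.of_append_left
  have hp₂ : p₂.reverse.IsPath := hp.of_append_right.of_cons.reverse
  have hsplit : corr P u v = corr P u s * corr P s t * corr P v t := by
    rw [corr_eq_prod_edgeCorr hT hMarkov hunif hp, corr_eq_prod_edgeCorr hT hMarkov hunif hp₁,
      corr_comm P v t, corr_eq_prod_edgeCorr hT hMarkov hunif hp.of_append_right.of_cons,
      Walk.edges_append, Walk.edges_cons, List.map_append, List.map_cons, List.prod_append,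
      List.prod_cons, edgeCorr_mk, mul_assoc]
  have hedge : c s * c t * |corr P s t| = c w * c w' * |corr P w w'| := by
    rcases Sym2.eq_iff.1 hse with ⟨rfl, rfl⟩ | ⟨rfl, rfl⟩
    · rfl
    · rw [corr_comm]; ring
  have hnil : ¬p₁.Nil ∨ ¬p₂.reverse.Nil := by
    by_contra! h
    rw [← Walk.length_eq_zero_iff, ← Walk.length_eq_zero_iff, Walk.length_reverse] at h
    simp [h.1, h.2] at hlen
  have hc' := fun i => (hc i).le
  obtain ⟨h₁, h₁'⟩ := mul_abs_corr_le hT hMarkov hunif hc' hm0 hm1 hm hcm hp₁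
  obtain ⟨h₂, h₂'⟩ := mul_abs_corr_le hT hMarkov hunif hc' hm0 hm1 hm hcm hp₂
  have hprod : c u * |corr P u s| * (c v * |corr P v t|) < c s * c t := by
    rcases hnil with h | h
    · exact (mul_le_mul_of_nonneg_left h₂ (mul_nonneg (hc' u) (abs_nonneg _))).trans_lt
        (mul_lt_mul_of_pos_right (h₁' h) (hc t))
    · exact (mul_le_mul_of_nonneg_right h₁ (mul_nonneg (hc' v) (abs_nonneg _))).trans_lt
        (mul_lt_mul_of_pos_left (h₂' h) (hc s))
  simp only [abs_mul, abs_of_pos (hc _)]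
  rw [← hedge, hsplit, abs_mul, abs_mul]
  calc c u * c v * (|corr P u s| * |corr P s t| * |corr P v t|)
      = c u * |corr P u s| * (c v * |corr P v t|) * |corr P s t| := by ring
    _ < c s * c t * |corr P s t| := mul_lt_mul_of_pos_right hprod (hpos s t hst)

end Correlation

section Threshold

variable {V : Type*}

lemma exists_evTuple_of_thresh_pos {T : SimpleGraph V} {I : V → V → ℝ} (h : 0 < thresh T I) :
    ∃ w w' u v, EVtuple T w w' u v := by
  by_contra! hne
  have hempty : {x : ℝ | ∃ w w' u v, EVtuple T w w' u v ∧ x = I w w' - I u v} = ∅ :=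
    Set.eq_empty_of_forall_notMem fun _ ⟨w, w', u, v, h, _⟩ => hne w w' u v h
  -- `sInf ∅ = 0` in `ℝ`
  simp [thresh, hempty] at h

lemma thresh_pos [Finite V] {T : SimpleGraph V} {I : V → V → ℝ}
    (hne : ∃ w w' u v, EVtuple T w w' u v)
    (hlt : ∀ w w' u v, EVtuple T w w' u v → I u v < I w w') : 0 < thresh T I := by
  set S := {x : ℝ | ∃ w w' u v, EVtuple T w w' u v ∧ x = I w w' - I u v}
  have hfin : S.Finite := (Set.finite_range fun t : V × V × V × V =>
    I t.1 t.2.1 - I t.2.2.1 t.2.2.2).subset fun _ ⟨w, w', u, v, _, hx⟩ => ⟨(w, w', u, v), hx.symm⟩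
  obtain ⟨w, w', u, v, h⟩ := hne
  obtain ⟨w, w', u, v, h, hx⟩ := (show S.Nonempty from ⟨_, w, w', u, v, h, rfl⟩).csInf_mem hfin
  have := hlt w w' u v h
  change 0 < 1 / 2 * sInf S
  rw [hx]
  linarith

lemma finite_setOf_abs_corr [Finite V] (T : SimpleGraph V) (P : (V → Bool) → ℝ) :
    {x : ℝ | ∃ a b, T.Adj a b ∧ x = |corr P a b|}.Finite :=
  (Set.finite_range fun t : V × V => |corr P t.1 t.2|).subset fun _ ⟨a, b, _, hx⟩ =>
    ⟨(a, b), hx.symm⟩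

lemma le_maxEdgeCorr [Finite V] {T : SimpleGraph V} (P : (V → Bool) → ℝ) {i j : V}
    (h : T.Adj i j) : |corr P i j| ≤ maxEdgeCorr T P :=
  le_csSup (finite_setOf_abs_corr T P).bddAbove ⟨i, j, h, rfl⟩

lemma maxEdgeCorr_mem_Ioo [Finite V] {T : SimpleGraph V} {P : (V → Bool) → ℝ} {i j : V}
    (hcorr : ∀ i j, T.Adj i j → |corr P i j| ∈ Set.Ioo 0 1) (h : T.Adj i j) :
    maxEdgeCorr T P ∈ Set.Ioo 0 1 := by
  obtain ⟨a, b, hab, hx⟩ := Set.Nonempty.csSup_mem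
    (s := {x : ℝ | ∃ a b, T.Adj a b ∧ x = |corr P a b|}) ⟨_, i, j, h, rfl⟩
    (finite_setOf_abs_corr T P)
  rw [maxEdgeCorr, hx]
  exact hcorr a b hab

end Threshold

theorem noisy_threshold_pos_nonidentical_bsc_general
    {V : Type*} [Fintype V] [DecidableEq V]
    (T : SimpleGraph V) (hT : T.IsTree)
    (P : (V → Bool) → ℝ) (hMarkov : IsMarkovTree T P)
    (hunif : ∀ (i : V) (a : Bool), marg1 P i a = 1 / 2)
    (hthresh : 0 < thresh T (mi P))
    (hcorr : ∀ i j : V, T.Adj i j → |corr P i j| ∈ Set.Ioo (0 : ℝ) 1)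
    (q : V → ℝ) (hq : ∀ i, q i ∈ Set.Ico (0 : ℝ) (1 / 2)) :
    ((∀ i j : V, (1 - 2 * q i) / (1 - 2 * q j) ∈
        Set.Ioo (maxEdgeCorr T P) (1 / maxEdgeCorr T P)) →
      0 < thresh T (fun i j => miF (noisyPair P q i j))) ∧
    ((∀ i j : V, q i = q j) →
      ∀ i j : V, (1 - 2 * q i) / (1 - 2 * q j) ∈
        Set.Ioo (maxEdgeCorr T P) (1 / maxEdgeCorr T P)) := by
  obtain ⟨w, w', u, v, hev⟩ := exists_evTuple_of_thresh_pos hthresh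
  have hm := maxEdgeCorr_mem_Ioo hcorr hev.1
  have hc : ∀ i, 0 < 1 - 2 * q i ∧ 1 - 2 * q i ≤ 1 := fun i =>
    ⟨by linarith [(hq i).2], by linarith [(hq i).1]⟩
  refine ⟨fun hratio => thresh_pos ⟨w, w', u, v, hev⟩ fun w w' u v h => ?_, fun hqq i j => ?_⟩
  · have hcm : ∀ i j, (1 - 2 * q i) * maxEdgeCorr T P < 1 - 2 * q j := fun i j => by
      simpa using (div_lt_div_iff₀ (hc j).1 hm.1).1 (hratio i j).2
    rw [miF_noisyPair hunif, miF_noisyPair hunif]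
    refine miOfCorr_lt_of_abs_lt (abs_mul_corr_lt_of_evTuple (c := fun i => 1 - 2 * q i)
      hT.isAcyclic hMarkov hunif (fun i => (hc i).1) hm.1.le hm.2.le
      (fun _ _ => le_maxEdgeCorr P) hcm (fun i j h => (hcorr i j h).1) h) ?_
    rw [abs_mul, abs_mul, abs_of_pos (hc w).1, abs_of_pos (hc w').1]
    exact mul_le_one₀ (mul_le_one₀ (hc w).2 (hc w').1.le (hc w').2) (abs_nonneg _)
      (hcorr w w' h.1).2.le
  · rw [hqq i j, div_self (hc j).1.ne']
    exact ⟨hm.2, one_lt_one_div hm.1 hm.2⟩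

/-- **Sufficient condition for a positive noisy information threshold under
non-identically distributed binary symmetric noise.**  If the hidden `±1`-valued
tree model has `I^o > 0` and edge correlations in `(0, 1)` in absolute value, and
the crossover probabilities satisfy
`(1 − 2q_i)/(1 − 2q_j) ∈ (max_E |E[X_i X_j]|, 1/max_E |E[X_i X_j]|)` for all
`i, j`, then the noisy information threshold is positive, `I^o_† > 0`;
in particular, if all `q_i` are equal the condition always holds. -/
theorem noisy_threshold_pos_nonidentical_bsc
    {V : Type*} [Fintype V] [DecidableEq V]
    (T : SimpleGraph V) (hT : T.IsTree)
    (P : (V → Bool) → ℝ) (hP : IsProbDist P) (hMarkov : IsMarkovTree T P)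
    (hunif : ∀ (i : V) (a : Bool), marg1 P i a = 1 / 2)
    (hthresh : 0 < thresh T (mi P))
    (hcorr : ∀ i j : V, T.Adj i j → |corr P i j| ∈ Set.Ioo (0 : ℝ) 1)
    (q : V → ℝ) (hq : ∀ i, q i ∈ Set.Ico (0 : ℝ) (1 / 2)) :
    ((∀ i j : V, (1 - 2 * q i) / (1 - 2 * q j) ∈
        Set.Ioo (maxEdgeCorr T P) (1 / maxEdgeCorr T P)) →
      0 < thresh T (fun i j => miF (noisyPair P q i j))) ∧
    ((∀ i j : V, q i = q j) →
      ∀ i j : V, (1 - 2 * q i) / (1 - 2 * q j) ∈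
        Set.Ioo (maxEdgeCorr T P) (1 / maxEdgeCorr T P)) :=
  noisy_threshold_pos_nonidentical_bsc_general T hT P hMarkov hunif hthresh hcorr q hq

end TreePaper
end
end
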